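/- arXiv:math/0702617 — 6 statements merged into one kernel-verified Lean document; each statement's English description precedes it below -/
import Mathlib

section
/- Let u be a bounded continuous solution on Ω̄ × [0,∞) of the nonlocal Dirichlet problem u_t = K_φ(u) in Ω × (0,∞). Then the equation u_t = K_φ(u) also holds at every boundary point (x,t) ∈ ∂Ω × (0,∞), i.e. the equation extends continuously up to the topological boundary of Ω. -/
open MeasureTheory Set Real Filter Topology

/-- The extended ("μ-") boundary `∂^μΩ = Ω̄^μ \ Ω`. -/
noncomputable def muBoundary (n : ℕ) (μ : (Fin n → ℝ) → ℝ) (Ω : Set (Fin n → ℝ)) :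
    Set (Fin n → ℝ) :=
  closure {y | ∃ x ∈ Ω, ∃ z ∈ tsupport μ, y = x + z} \ Ω

/-- The nonlocal Dirichlet operator `K_φ`. -/
noncomputable def Kop (n : ℕ) (μ : (Fin n → ℝ) → ℝ) (Ω : Set (Fin n → ℝ))
    (φ u : (Fin n → ℝ) → ℝ → ℝ) (x : Fin n → ℝ) (t : ℝ) : ℝ :=
  (∫ z in {z | x + z ∈ Ω}, u (x + z) t * μ z)
    + (∫ z in {z | x + z ∈ muBoundary n μ Ω}, φ (x + z) t * μ z) - u x t

/-! ### Auxiliary lemmas -/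

/-- Continuity of translation in `L¹`. -/
lemma tendsto_L1_translate {n : ℕ} {μ : (Fin n → ℝ) → ℝ} (hμint : Integrable μ)
    {α : Type*} {l : Filter α} {x : α → Fin n → ℝ} {x₀ : Fin n → ℝ}
    (hx : Tendsto x l (𝓝 x₀)) :
    Tendsto (fun k => ∫ y, |μ (y - x k) - μ (y - x₀)|) l (𝓝 0) := by
  haveI : Fact ((1:ENNReal) ≤ 1) := ⟨le_refl _⟩
  set F : C((Fin n → ℝ) × (Fin n → ℝ), Fin n → ℝ) :=
    ⟨fun p => p.2 - p.1, continuous_snd.sub continuous_fst⟩ with hF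
  have hTm : ∀ a : Fin n → ℝ, MeasurePreserving (fun y => y - a)
      (volume : Measure (Fin n → ℝ)) volume := fun a =>
    measurePreserving_sub_right volume a
  set g : Lp ℝ 1 (volume : Measure (Fin n → ℝ)) := hμint.toL1 μ with hg
  set A : (Fin n → ℝ) → Lp ℝ 1 (volume : Measure (Fin n → ℝ)) :=
    fun a => Lp.compMeasurePreserving (F.curry a) (hTm a) g with hA
  have hcont : Tendsto (fun k => A (x k)) l (𝓝 (A x₀)) :=
    Filter.Tendsto.compMeasurePreservingLp tendsto_const_nhds
      ((F.curry.continuous.tendsto x₀).comp hx) _ _ (by norm_num)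
  have hdist : Tendsto (fun k => dist (A (x k)) (A x₀)) l (𝓝 0) := by
    simpa using hcont.dist (tendsto_const_nhds (x := A x₀))
  have h1 : ∀ a, (A a : (Fin n → ℝ) → ℝ) =ᵐ[volume] fun y => μ (y - a) := by
    intro a
    refine (Lp.coeFn_compMeasurePreserving g (hTm a)).trans ?_
    have : (g : (Fin n → ℝ) → ℝ) =ᵐ[volume] μ := hμint.coeFn_toL1
    exact (hTm a).quasiMeasurePreserving.ae_eq_comp this
  refine hdist.congr fun k => ?_
  have hsub : ((A (x k) - A x₀ : Lp ℝ 1 _) : (Fin n → ℝ) → ℝ)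
      =ᵐ[volume] fun y => μ (y - x k) - μ (y - x₀) := by
    refine (Lp.coeFn_sub _ _).trans ?_
    filter_upwards [h1 (x k), h1 x₀] with y h2 h3
    simp [h2, h3]
  rw [dist_eq_norm, L1.norm_eq_integral_norm]
  refine integral_congr_ae ?_
  filter_upwards [hsub] with y hy
  rw [hy, Real.norm_eq_abs]

/-- Change of variables `z ↦ x + z` in the set integrals appearing in `Kop`. -/
lemma shift_setIntegral {n : ℕ} (μ : (Fin n → ℝ) → ℝ) {S : Set (Fin n → ℝ)}
    (hS : MeasurableSet S) (g : (Fin n → ℝ) → ℝ) (x : Fin n → ℝ) :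
    ∫ z in {z | x + z ∈ S}, g (x + z) * μ z = ∫ y in S, g y * μ (y - x) := by
  have hpre : MeasurableSet {z | x + z ∈ S} := by
    have : Measurable fun z : Fin n → ℝ => x + z := measurable_const_add x
    exact this hS
  rw [← integral_indicator hpre, ← integral_indicator hS,
    ← integral_add_left_eq_self (fun y => S.indicator (fun y => g y * μ (y - x)) y) x]
  refine integral_congr_ae (Eventually.of_forall fun z => ?_)
  by_cases h : x + z ∈ S
  · simp [indicator_of_mem h, indicator_of_mem (show z ∈ {z | x + z ∈ S} from h)]
  · simp [indicator_of_notMem h, indicator_of_notMem (show z ∉ {z | x + z ∈ S} from h)]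

lemma setint_integrable {n : ℕ} {μ : (Fin n → ℝ) → ℝ} (hμint : Integrable μ)
    {S : Set (Fin n → ℝ)} (hS : MeasurableSet S)
    {g : (Fin n → ℝ) → ℝ} (hgc : ContinuousOn g S) {C : ℝ} (hgb : ∀ y ∈ S, |g y| ≤ C)
    (x : Fin n → ℝ) : IntegrableOn (fun y => g y * μ (y - x)) S := by
  have hμx : Integrable (fun y => μ (y - x)) := hμint.comp_sub_right x
  have hmeas : AEStronglyMeasurable (fun y => g y * μ (y - x)) (volume.restrict S) :=
    (hgc.aestronglyMeasurable hS).mul hμx.aestronglyMeasurable.restrict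
  refine Integrable.mono' ((hμx.norm.const_mul C).integrableOn) hmeas ?_
  refine (ae_restrict_iff' hS).mpr (Eventually.of_forall fun y hy => ?_)
  rw [norm_mul]
  exact mul_le_mul_of_nonneg_right (hgb y hy) (norm_nonneg _)

lemma setint_bound {n : ℕ} {μ : (Fin n → ℝ) → ℝ} (hμ0 : ∀ z, 0 ≤ μ z)
    (hμint : Integrable μ) (hμ1 : ∫ z, μ z = 1)
    {S : Set (Fin n → ℝ)} (hS : MeasurableSet S)
    {g : (Fin n → ℝ) → ℝ} (hgc : ContinuousOn g S) {C : ℝ} (hC : 0 ≤ C)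
    (hgb : ∀ y ∈ S, |g y| ≤ C) (x : Fin n → ℝ) :
    |∫ y in S, g y * μ (y - x)| ≤ C := by
  have hμx : Integrable (fun y => μ (y - x)) := hμint.comp_sub_right x
  have h1 := setint_integrable hμint hS hgc hgb x
  calc |∫ y in S, g y * μ (y - x)| ≤ ∫ y in S, ‖g y * μ (y - x)‖ :=
        by rw [← Real.norm_eq_abs]; exact norm_integral_le_integral_norm _
    _ ≤ ∫ y in S, C * μ (y - x) := by
        refine setIntegral_mono_on h1.norm ((hμx.const_mul C).integrableOn) hS fun y hy => ?_
        rw [norm_mul]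
        have : ‖μ (y - x)‖ = μ (y - x) := abs_of_nonneg (hμ0 _)
        rw [this]
        exact mul_le_mul_of_nonneg_right (hgb y hy) (hμ0 _)
    _ ≤ ∫ y, C * μ (y - x) := by
        refine setIntegral_le_integral (hμx.const_mul C) ?_
        exact Eventually.of_forall fun y => mul_nonneg hC (hμ0 _)
    _ = C := by
        rw [integral_const_mul, integral_sub_right_eq_self μ x, hμ1, mul_one]

lemma setint_tendsto {n : ℕ} {μ : (Fin n → ℝ) → ℝ} (hμint : Integrable μ)
    {S : Set (Fin n → ℝ)} (hS : MeasurableSet S)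
    {g : (Fin n → ℝ) → ℝ → ℝ}
    (hgc : ContinuousOn (fun p : (Fin n → ℝ) × ℝ => g p.1 p.2) (S ×ˢ Ici (0:ℝ)))
    {C : ℝ} (hgb : ∀ y ∈ S, ∀ s ≥ (0:ℝ), |g y s| ≤ C)
    {α : Type*} {l : Filter α} [l.IsCountablyGenerated] {x : α → Fin n → ℝ} {x₀ : Fin n → ℝ}
    (hx : Tendsto x l (𝓝 x₀)) {t : α → ℝ} {t₀ : ℝ} (ht : Tendsto t l (𝓝 t₀))
    (ht0 : ∀ᶠ k in l, 0 ≤ t k) (ht₀ : 0 ≤ t₀) :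
    Tendsto (fun k => ∫ y in S, g y (t k) * μ (y - x k)) l
      (𝓝 (∫ y in S, g y t₀ * μ (y - x₀))) := by
  set C' : ℝ := max C 0 with hC'
  have hgb' : ∀ y ∈ S, ∀ s ≥ (0:ℝ), |g y s| ≤ C' := fun y hy s hs =>
    (hgb y hy s hs).trans (le_max_left _ _)
  have hsec : ∀ s ≥ (0:ℝ), ContinuousOn (fun y => g y s) S := by
    intro s hs
    exact hgc.comp ((continuous_id.prodMk continuous_const).continuousOn)
      (fun y hy => ⟨hy, hs⟩)
  have hint : ∀ s ≥ (0:ℝ), ∀ a : Fin n → ℝ,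
      IntegrableOn (fun y => g y s * μ (y - a)) S := fun s hs a =>
    setint_integrable hμint hS (hsec s hs) (fun y hy => hgb' y hy s hs) a
  have hJ : Tendsto (fun k => ∫ y in S, g y (t k) * μ (y - x₀)) l
      (𝓝 (∫ y in S, g y t₀ * μ (y - x₀))) := by
    refine tendsto_integral_filter_of_dominated_convergence
      (fun y => C' * ‖μ (y - x₀)‖) ?_ ?_
      (((hμint.comp_sub_right x₀).norm.const_mul C').integrableOn) ?_
    · filter_upwards [ht0] with k hk
      exact (hint (t k) hk x₀).aestronglyMeasurable
    · filter_upwards [ht0] with k hk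
      refine (ae_restrict_iff' hS).mpr (Eventually.of_forall fun y hy => ?_)
      rw [norm_mul]
      exact mul_le_mul_of_nonneg_right (hgb' y hy _ hk) (norm_nonneg _)
    · refine (ae_restrict_iff' hS).mpr (Eventually.of_forall fun y hy => ?_)
      have h1 : Tendsto (fun k => (y, t k)) l (𝓝[S ×ˢ Ici (0:ℝ)] (y, t₀)) := by
        refine tendsto_nhdsWithin_iff.mpr ⟨tendsto_const_nhds.prodMk_nhds ht, ?_⟩
        filter_upwards [ht0] with k hk
        exact ⟨hy, hk⟩
      have h2 : Tendsto (fun k => g y (t k)) l (𝓝 (g y t₀)) :=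
        (hgc (y, t₀) ⟨hy, ht₀⟩).tendsto.comp h1
      exact h2.mul tendsto_const_nhds
  have hdiff : Tendsto (fun k => (∫ y in S, g y (t k) * μ (y - x k))
      - ∫ y in S, g y (t k) * μ (y - x₀)) l (𝓝 0) := by
    have htrans := (tendsto_L1_translate hμint hx).const_mul C'
    rw [mul_zero] at htrans
    refine squeeze_zero_norm' ?_ htrans
    filter_upwards [ht0] with k hk
    have h1 := hint (t k) hk (x k)
    have h2 := hint (t k) hk x₀
    have hμd : Integrable (fun y => μ (y - x k) - μ (y - x₀)) :=
      (hμint.comp_sub_right (x k)).sub (hμint.comp_sub_right x₀)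
    rw [← integral_sub h1 h2, Real.norm_eq_abs]
    calc |∫ y in S, (g y (t k) * μ (y - x k) - g y (t k) * μ (y - x₀))|
        ≤ ∫ y in S, ‖g y (t k) * μ (y - x k) - g y (t k) * μ (y - x₀)‖ := by
          rw [← Real.norm_eq_abs]; exact norm_integral_le_integral_norm _
      _ ≤ ∫ y in S, C' * |μ (y - x k) - μ (y - x₀)| := by
          refine setIntegral_mono_on (h1.sub h2).norm
            ((hμd.abs.const_mul C').integrableOn) hS fun y hy => ?_
          rw [← mul_sub, norm_mul, Real.norm_eq_abs, Real.norm_eq_abs]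
          exact mul_le_mul_of_nonneg_right (hgb' y hy _ hk) (abs_nonneg _)
      _ ≤ ∫ y, C' * |μ (y - x k) - μ (y - x₀)| := by
          refine setIntegral_le_integral (hμd.abs.const_mul C') ?_
          exact Eventually.of_forall fun y => mul_nonneg (le_max_right C 0) (abs_nonneg _)
      _ = C' * ∫ y, |μ (y - x k) - μ (y - x₀)| := integral_const_mul _ _
  have hsum := hdiff.add hJ
  rw [zero_add] at hsum
  refine hsum.congr fun k => by ring

/-- The representation of `Kop` after translation. -/
lemma Kop_eq {n : ℕ} (μ : (Fin n → ℝ) → ℝ) {Ω : Set (Fin n → ℝ)} (hΩo : IsOpen Ω)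
    (φ u : (Fin n → ℝ) → ℝ → ℝ) (x : Fin n → ℝ) (t : ℝ) :
    Kop n μ Ω φ u x t = (∫ y in Ω, u y t * μ (y - x))
      + (∫ y in muBoundary n μ Ω, φ y t * μ (y - x)) - u x t := by
  have hS2 : MeasurableSet (muBoundary n μ Ω) :=
    isClosed_closure.measurableSet.diff hΩo.measurableSet
  rw [Kop, shift_setIntegral μ hΩo.measurableSet (fun y => u y t) x,
    shift_setIntegral μ hS2 (fun y => φ y t) x]

/-- Joint continuity (as a filter limit) of `Kop` on `closure Ω ×ˢ Ici 0`. -/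
lemma Kop_tendsto {n : ℕ} {μ : (Fin n → ℝ) → ℝ} {Ω : Set (Fin n → ℝ)}
    (hμint : Integrable μ) (hΩo : IsOpen Ω)
    {φ u : (Fin n → ℝ) → ℝ → ℝ}
    (hφc : ContinuousOn (fun p : (Fin n → ℝ) × ℝ => φ p.1 p.2)
      (muBoundary n μ Ω ×ˢ Set.Ici (0:ℝ)))
    {Mφ : ℝ} (hφb : ∀ x ∈ muBoundary n μ Ω, ∀ t ≥ (0:ℝ), |φ x t| ≤ Mφ)
    (huc : ContinuousOn (fun p : (Fin n → ℝ) × ℝ => u p.1 p.2) (closure Ω ×ˢ Set.Ici (0:ℝ)))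
    {M : ℝ} (hub : ∀ x ∈ closure Ω, ∀ t ≥ (0:ℝ), |u x t| ≤ M)
    {α : Type*} {l : Filter α} [l.IsCountablyGenerated] {x : α → Fin n → ℝ} {x₀ : Fin n → ℝ}
    (hx : Tendsto x l (𝓝 x₀)) {t : α → ℝ} {t₀ : ℝ} (ht : Tendsto t l (𝓝 t₀))
    (hxmem : ∀ᶠ k in l, x k ∈ closure Ω) (hx₀ : x₀ ∈ closure Ω)
    (ht0 : ∀ᶠ k in l, 0 ≤ t k) (ht₀ : 0 ≤ t₀) :
    Tendsto (fun k => Kop n μ Ω φ u (x k) (t k)) l (𝓝 (Kop n μ Ω φ u x₀ t₀)) := by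
  have hS2 : MeasurableSet (muBoundary n μ Ω) :=
    isClosed_closure.measurableSet.diff hΩo.measurableSet
  have hucl : ContinuousOn (fun p : (Fin n → ℝ) × ℝ => u p.1 p.2) (Ω ×ˢ Set.Ici (0:ℝ)) :=
    huc.mono (prod_mono_left subset_closure)
  have hubΩ : ∀ y ∈ Ω, ∀ s ≥ (0:ℝ), |u y s| ≤ M := fun y hy => hub y (subset_closure hy)
  have T1 := setint_tendsto hμint hΩo.measurableSet hucl hubΩ hx ht ht0 ht₀
  have T2 := setint_tendsto hμint hS2 hφc hφb hx ht ht0 ht₀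
  have T3 : Tendsto (fun k => u (x k) (t k)) l (𝓝 (u x₀ t₀)) := by
    have h0 : Tendsto (fun k => ((x k, t k) : (Fin n → ℝ) × ℝ)) l
        (𝓝[closure Ω ×ˢ Set.Ici (0:ℝ)] (x₀, t₀)) := by
      refine tendsto_nhdsWithin_iff.mpr ⟨hx.prodMk_nhds ht, ?_⟩
      filter_upwards [hxmem, ht0] with k h1 h2
      exact ⟨h1, h2⟩
    exact (huc (x₀, t₀) ⟨hx₀, ht₀⟩).tendsto.comp h0
  simp only [Kop_eq μ hΩo φ u]
  exact (T1.add T2).sub T3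

/-- Uniform bound for `Kop` on `closure Ω ×ˢ Ici 0`. -/
lemma Kop_bound {n : ℕ} {μ : (Fin n → ℝ) → ℝ} {Ω : Set (Fin n → ℝ)}
    (hμ0 : ∀ z, 0 ≤ μ z) (hμint : Integrable μ) (hμ1 : ∫ z, μ z = 1) (hΩo : IsOpen Ω)
    {φ u : (Fin n → ℝ) → ℝ → ℝ}
    (hφc : ContinuousOn (fun p : (Fin n → ℝ) × ℝ => φ p.1 p.2)
      (muBoundary n μ Ω ×ˢ Set.Ici (0:ℝ)))
    {Mφ : ℝ} (hφb : ∀ x ∈ muBoundary n μ Ω, ∀ t ≥ (0:ℝ), |φ x t| ≤ Mφ)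
    (huc : ContinuousOn (fun p : (Fin n → ℝ) × ℝ => u p.1 p.2) (closure Ω ×ˢ Set.Ici (0:ℝ)))
    {M : ℝ} (hub : ∀ x ∈ closure Ω, ∀ t ≥ (0:ℝ), |u x t| ≤ M)
    {x₀ : Fin n → ℝ} (hx₀ : x₀ ∈ closure Ω) {t₀ : ℝ} (ht₀ : 0 ≤ t₀) :
    |Kop n μ Ω φ u x₀ t₀| ≤ max M 0 + max Mφ 0 + max M 0 := by
  have hS2 : MeasurableSet (muBoundary n μ Ω) :=
    isClosed_closure.measurableSet.diff hΩo.measurableSet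
  have hsecu : ContinuousOn (fun y => u y t₀) Ω := by
    refine (huc.mono (prod_mono_left subset_closure)).comp
      ((continuous_id.prodMk continuous_const).continuousOn) (fun y hy => ⟨hy, ht₀⟩)
  have hsecφ : ContinuousOn (fun y => φ y t₀) (muBoundary n μ Ω) :=
    hφc.comp ((continuous_id.prodMk continuous_const).continuousOn) (fun y hy => ⟨hy, ht₀⟩)
  have B1 : |∫ y in Ω, u y t₀ * μ (y - x₀)| ≤ max M 0 := by
    refine setint_bound hμ0 hμint hμ1 hΩo.measurableSet hsecu (le_max_right _ _)
      (fun y hy => (hub y (subset_closure hy) t₀ ht₀).trans (le_max_left _ _)) x₀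
  have B2 : |∫ y in muBoundary n μ Ω, φ y t₀ * μ (y - x₀)| ≤ max Mφ 0 :=
    setint_bound hμ0 hμint hμ1 hS2 hsecφ (le_max_right _ _)
      (fun y hy => (hφb y hy t₀ ht₀).trans (le_max_left _ _)) x₀
  have B3 : |u x₀ t₀| ≤ max M 0 := (hub x₀ hx₀ t₀ ht₀).trans (le_max_left _ _)
  rw [Kop_eq μ hΩo φ u]
  calc |(∫ y in Ω, u y t₀ * μ (y - x₀)) + (∫ y in muBoundary n μ Ω, φ y t₀ * μ (y - x₀))
        - u x₀ t₀|
      ≤ |(∫ y in Ω, u y t₀ * μ (y - x₀)) + (∫ y in muBoundary n μ Ω, φ y t₀ * μ (y - x₀))|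
        + |u x₀ t₀| := abs_sub _ _
    _ ≤ |∫ y in Ω, u y t₀ * μ (y - x₀)| + |∫ y in muBoundary n μ Ω, φ y t₀ * μ (y - x₀)|
        + |u x₀ t₀| := by gcongr; exact abs_add_le _ _
    _ ≤ max M 0 + max Mφ 0 + max M 0 := by gcongr

/-- if a bounded continuous `u` solves `u_t = K_φ(u)` in `Ω × (0,∞)`, then
the same equation holds at every topological boundary point `(x,t) ∈ ∂Ω × (0,∞)`. -/
theorem equation_holds_on_boundary (n : ℕ) (μ : (Fin n → ℝ) → ℝ) (Ω : Set (Fin n → ℝ))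
    (hμ0 : ∀ z, 0 ≤ μ z) (hμint : Integrable μ) (hμ1 : ∫ z, μ z = 1)
    (hΩo : IsOpen Ω) (hΩb : Bornology.IsBounded Ω)
    (φ u : (Fin n → ℝ) → ℝ → ℝ)
    (hφc : ContinuousOn (fun p : (Fin n → ℝ) × ℝ => φ p.1 p.2)
      (muBoundary n μ Ω ×ˢ Set.Ici (0:ℝ)))
    (Mφ : ℝ) (hφb : ∀ x ∈ muBoundary n μ Ω, ∀ t ≥ (0:ℝ), |φ x t| ≤ Mφ)
    (huc : ContinuousOn (fun p : (Fin n → ℝ) × ℝ => u p.1 p.2) (closure Ω ×ˢ Set.Ici (0:ℝ)))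
    (M : ℝ) (hub : ∀ x ∈ closure Ω, ∀ t ≥ (0:ℝ), |u x t| ≤ M)
    (hsol : ∀ x ∈ Ω, ∀ t > (0:ℝ), HasDerivAt (fun s => u x s) (Kop n μ Ω φ u x t) t) :
    ∀ x ∈ frontier Ω, ∀ t > (0:ℝ), HasDerivAt (fun s => u x s) (Kop n μ Ω φ u x t) t := by
  intro x hx t ht
  have hxcl : x ∈ closure Ω := frontier_subset_closure hx
  set C₀ : ℝ := max M 0 + max Mφ 0 + max M 0 with hC₀
  -- continuity in time of `Kop` at positive times, for any base point in the closure
  have hψca : ∀ y ∈ closure Ω, ∀ s > (0:ℝ), ContinuousAt (fun r => Kop n μ Ω φ u y r) s := by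
    intro y hy s hs
    exact Kop_tendsto hμint hΩo hφc hφb huc hub tendsto_const_nhds tendsto_id
      (Eventually.of_forall fun _ => hy) hy
      ((eventually_gt_nhds hs).mono fun r hr => hr.le) hs.le
  have hψc : ∀ y ∈ closure Ω, ContinuousOn (fun r => Kop n μ Ω φ u y r) (Ioi 0) :=
    fun y hy r hr => (hψca y hy r hr).continuousWithinAt
  -- the integral identity up to the boundary
  have key : ∀ a ∈ Ioi (0:ℝ), ∀ b ∈ Ioi (0:ℝ),
      u x b - u x a = ∫ s in a..b, Kop n μ Ω φ u x s := by
    intro a ha b hb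
    obtain ⟨xk, hxkΩ, hxk⟩ := mem_closure_iff_seq_limit.mp hxcl
    have hIcc : uIcc a b ⊆ Ioi (0:ℝ) := fun s hs => lt_of_lt_of_le (lt_min ha hb) hs.1
    have hIoc : Set.uIoc a b ⊆ Ioi (0:ℝ) := uIoc_subset_uIcc.trans hIcc
    have hk : ∀ k, u (xk k) b - u (xk k) a = ∫ s in a..b, Kop n μ Ω φ u (xk k) s := by
      intro k
      refine (intervalIntegral.integral_eq_sub_of_hasDerivAt
        (fun s hs => hsol (xk k) (hxkΩ k) s (hIcc hs)) ?_).symm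
      exact ((hψc (xk k) (subset_closure (hxkΩ k))).mono hIcc).intervalIntegrable
    have hTu : ∀ s ≥ (0:ℝ), Tendsto (fun k => u (xk k) s) atTop (𝓝 (u x s)) := by
      intro s hs
      have h0 : Tendsto (fun k => ((xk k, s) : (Fin n → ℝ) × ℝ)) atTop
          (𝓝[closure Ω ×ˢ Set.Ici (0:ℝ)] (x, s)) := by
        refine tendsto_nhdsWithin_iff.mpr ⟨hxk.prodMk_nhds tendsto_const_nhds, ?_⟩
        exact Eventually.of_forall fun k => ⟨subset_closure (hxkΩ k), hs⟩
      exact (huc (x, s) ⟨hxcl, hs⟩).tendsto.comp h0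
    have hL : Tendsto (fun k => u (xk k) b - u (xk k) a) atTop (𝓝 (u x b - u x a)) :=
      (hTu b hb.le).sub (hTu a ha.le)
    have hR : Tendsto (fun k => ∫ s in a..b, Kop n μ Ω φ u (xk k) s) atTop
        (𝓝 (∫ s in a..b, Kop n μ Ω φ u x s)) := by
      refine intervalIntegral.tendsto_integral_filter_of_dominated_convergence
        (fun _ => C₀) ?_ ?_ ?_ ?_
      · refine Eventually.of_forall fun k => ?_
        exact (((hψc (xk k) (subset_closure (hxkΩ k))).mono hIoc).aestronglyMeasurable
          measurableSet_uIoc)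
      · refine Eventually.of_forall fun k => ?_
        refine Eventually.of_forall fun s hs => ?_
        rw [Real.norm_eq_abs]
        exact Kop_bound hμ0 hμint hμ1 hΩo hφc hφb huc hub
          (subset_closure (hxkΩ k)) (hIoc hs).le
      · exact intervalIntegrable_const
      · refine Eventually.of_forall fun s hs => ?_
        exact Kop_tendsto hμint hΩo hφc hφb huc hub hxk tendsto_const_nhds
          (Eventually.of_forall fun k => subset_closure (hxkΩ k)) hxcl
          (Eventually.of_forall fun _ => (hIoc hs).le) (hIoc hs).le
    exact tendsto_nhds_unique hL (hR.congr fun k => (hk k).symm)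
  -- conclude via the fundamental theorem of calculus
  set c : ℝ := t / 2 with hc
  have hcpos : c ∈ Ioi (0:ℝ) := by simp [hc]; linarith
  have huIcc : uIcc c t ⊆ Ioi (0:ℝ) := by
    refine fun s hs => lt_of_lt_of_le (lt_min hcpos ht) hs.1
  have hFTC : HasDerivAt (fun s => ∫ r in c..s, Kop n μ Ω φ u x r)
      (Kop n μ Ω φ u x t) t := by
    refine intervalIntegral.integral_hasDerivAt_right
      (((hψc x hxcl).mono huIcc).intervalIntegrable) ?_ (hψca x hxcl t ht)
    exact ContinuousOn.stronglyMeasurableAtFilter isOpen_Ioi (hψc x hxcl) t ht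
  have heq : (fun s => u x s) =ᶠ[𝓝 t] fun s => u x c + ∫ r in c..s, Kop n μ Ω φ u x r := by
    filter_upwards [isOpen_Ioi.mem_nhds ht] with s hs
    have := key c hcpos s hs
    linarith
  exact ((hFTC.const_add (u x c)).congr_of_eventuallyEq heq)
end

section
/- Let μ be a nonnegative L¹ function on ℝⁿ of total mass 1 and u a bounded continuous solution of u_t(x,t) = ∫_{ℝⁿ} (u(x+z,t) − u(x,t)) dμ(z) on ℝⁿ × [0,∞) with initial data u₀. If u₀ has modulus of continuity ω₀ (i.e. |u₀(x) − u₀(y)| ≤ ω₀(|x−y|)), then for every t > 0 and η > 0, sup_{|x−y| ≤ η} |u(x,t) − u(y,t)| ≤ ω₀(η). In particular the modulus of continuity does not deteriorate in time. -/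
open MeasureTheory Set Real

/-- on the whole space `ℝⁿ`, the modulus of continuity of the initial data
is preserved: if `|u₀(x) − u₀(y)| ≤ ω₀(|x−y|)` then for all `t > 0` and `η > 0`,
`sup_{|x−y| ≤ η} |u(x,t) − u(y,t)| ≤ ω₀(η)`. -/
theorem modulus_preserved_whole_space (n : ℕ) (μ : (Fin n → ℝ) → ℝ)
    (hμ0 : ∀ z, 0 ≤ μ z) (hμint : Integrable μ) (hμ1 : ∫ z, μ z = 1)
    (u : (Fin n → ℝ) → ℝ → ℝ) (u₀ : (Fin n → ℝ) → ℝ)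
    (huc : Continuous (fun p : (Fin n → ℝ) × ℝ => u p.1 p.2))
    (M : ℝ) (hub : ∀ x, ∀ t ≥ (0:ℝ), |u x t| ≤ M)
    (hu0 : ∀ x, u x 0 = u₀ x)
    (hsol : ∀ x, ∀ t > (0:ℝ),
      HasDerivAt (fun s => u x s) (∫ z, (u (x + z) t - u x t) * μ z) t)
    (ω₀ : ℝ → ℝ) (hω₀mono : MonotoneOn ω₀ (Set.Ici 0))
    (hmod : ∀ x y, |u₀ x - u₀ y| ≤ ω₀ (dist x y)) :
    ∀ t > (0:ℝ), ∀ η > (0:ℝ), ∀ x y, dist x y ≤ η → |u x t - u y t| ≤ ω₀ η := by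
  intro t ht η hη x y hxy
  have hM : 0 ≤ M := le_trans (abs_nonneg _) (hub x 0 le_rfl)
  -- continuity in each variable
  have hut : ∀ w : Fin n → ℝ, Continuous fun s => u w s := fun w =>
    huc.comp (continuous_const.prodMk continuous_id)
  have hux : ∀ s : ℝ, Continuous fun w => u w s := fun s =>
    huc.comp (continuous_id.prodMk continuous_const)
  -- integrability helper
  have hint : ∀ φ : (Fin n → ℝ) → ℝ, Continuous φ → (∀ z, |φ z| ≤ M) →
      Integrable (fun z => φ z * μ z) := by
    intro φ hφ hB
    exact hμint.bdd_mul hφ.aestronglyMeasurable (ae_of_all _ (fun z => by simpa [Real.norm_eq_abs] using hB z))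
  -- splitting integrals
  have hsplit2 : ∀ φ ψ : (Fin n → ℝ) → ℝ, Continuous φ → Continuous ψ →
      (∀ z, |φ z| ≤ M) → (∀ z, |ψ z| ≤ M) →
      ∫ z, (φ z - ψ z) * μ z = (∫ z, φ z * μ z) - ∫ z, ψ z * μ z := by
    intro φ ψ hφ hψ hBφ hBψ
    have h1 : Integrable (fun z => φ z * μ z) := hint φ hφ hBφ
    have h2 : Integrable (fun z => ψ z * μ z) := hint ψ hψ hBψ
    simp only [sub_mul]
    exact integral_sub h1 h2
  -- Lipschitz in time
  have hlip : ∀ w : Fin n → ℝ, ∀ a b : ℝ, 0 ≤ a → a ≤ b →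
      |u w b - u w a| ≤ 2 * M * (b - a) := by
    intro w a b ha hab
    have key : ∀ a' : ℝ, 0 < a' → a' ≤ b → |u w b - u w a'| ≤ 2 * M * (b - a') := by
      intro a' ha' ha'b
      have hbound : ∀ s ∈ Icc a' b,
          ‖∫ z, (u (w + z) s - u w s) * μ z‖ ≤ 2 * M := by
        intro s hs
        have hs0 : (0:ℝ) ≤ s := le_trans ha'.le hs.1
        have : ‖∫ z, (u (w + z) s - u w s) * μ z‖ ≤ ∫ z, (2 * M) * μ z := by
          apply norm_integral_le_of_norm_le (hμint.const_mul _)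
          filter_upwards with z
          have h1 : |u (w + z) s - u w s| ≤ 2 * M := by
            have := hub (w + z) s hs0
            have := hub w s hs0
            calc |u (w + z) s - u w s| ≤ |u (w + z) s| + |u w s| := abs_sub _ _
              _ ≤ 2 * M := by linarith
          calc ‖(u (w + z) s - u w s) * μ z‖ = |u (w + z) s - u w s| * μ z := by
                rw [Real.norm_eq_abs, abs_mul, abs_of_nonneg (hμ0 z)]
            _ ≤ (2 * M) * μ z := mul_le_mul_of_nonneg_right h1 (hμ0 z)
        calc ‖∫ z, (u (w + z) s - u w s) * μ z‖ ≤ ∫ z, (2 * M) * μ z := this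
          _ = 2 * M := by rw [integral_const_mul, hμ1, mul_one]
      have := Convex.norm_image_sub_le_of_norm_hasDerivWithin_le
        (f := fun s => u w s) (f' := fun s => ∫ z, (u (w + z) s - u w s) * μ z)
        (s := Icc a' b) (C := 2 * M)
        (fun s hs => (hsol w s (lt_of_lt_of_le ha' hs.1)).hasDerivWithinAt)
        hbound (convex_Icc _ _) (left_mem_Icc.2 ha'b) (right_mem_Icc.2 ha'b)
      rw [Real.norm_eq_abs, Real.norm_eq_abs, abs_of_nonneg (by linarith : (0:ℝ) ≤ b - a')] at this
      exact this
    rcases ha.lt_or_eq with ha' | ha'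
    · exact key a ha' hab
    · subst ha'
      rcases hab.lt_or_eq with hb | hb
      · -- limit as ε → 0⁺
        have tend1 : Filter.Tendsto (fun ε => |u w b - u w ε|) (nhdsWithin 0 (Ioi 0))
            (nhds |u w b - u w 0|) :=
          ((continuous_const.sub (hut w)).abs.tendsto 0).mono_left nhdsWithin_le_nhds
        have tend2 : Filter.Tendsto (fun ε : ℝ => 2 * M * (b - ε)) (nhdsWithin 0 (Ioi 0))
            (nhds (2 * M * (b - 0))) :=
          ((continuous_const.mul (continuous_const.sub continuous_id)).tendsto 0).mono_left
            nhdsWithin_le_nhds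
        have hev : ∀ᶠ ε in nhdsWithin (0:ℝ) (Ioi 0),
            |u w b - u w ε| ≤ 2 * M * (b - ε) := by
          filter_upwards [Ioo_mem_nhdsGT_of_mem (⟨le_rfl, hb⟩ : (0:ℝ) ∈ Ico 0 b)] with ε hε
          exact key ε hε.1 hε.2.le
        have := le_of_tendsto_of_tendsto tend1 tend2 hev
        simpa using this
      · simp [← hb]
  -- MAIN CLAIM
  have main : ∀ h : Fin n → ℝ, (∀ w : Fin n → ℝ, dist (w + h) w ≤ η) →
      ∀ w, u (w + h) t - u w t ≤ ω₀ η := by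
    intro h hd
    set C := ω₀ η with hC
    set g : (Fin n → ℝ) → ℝ → ℝ := fun w s => u (w + h) s - u w s with hg
    have hgt : ∀ w, Continuous fun s => g w s := fun w => (hut (w + h)).sub (hut w)
    have hg0 : ∀ w, g w 0 ≤ C := by
      intro w
      have h1 : g w 0 = u₀ (w + h) - u₀ w := by simp [hg, hu0]
      have h2 : |u₀ (w + h) - u₀ w| ≤ ω₀ (dist (w + h) w) := hmod _ _
      have h3 : ω₀ (dist (w + h) w) ≤ C :=
        hω₀mono (mem_Ici.2 dist_nonneg) (mem_Ici.2 hη.le) (hd w)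
      rw [h1]; exact le_trans (le_trans (le_abs_self _) h2) h3
    have hgb : ∀ w s, 0 ≤ s → |g w s| ≤ 2 * M := by
      intro w s hs
      have := hub (w + h) s hs
      have := hub w s hs
      calc |g w s| ≤ |u (w + h) s| + |u w s| := abs_sub _ _
        _ ≤ 2 * M := by linarith
    set S : ℝ → ℝ := fun s => sSup (range fun w => g w s) with hS
    have hne : ∀ s : ℝ, (range fun w => g w s).Nonempty := fun s => ⟨g 0 s, mem_range_self 0⟩
    have hbdd : ∀ s : ℝ, 0 ≤ s → BddAbove (range fun w => g w s) := by
      intro s hs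
      exact ⟨2 * M, by rintro _ ⟨w, rfl⟩; exact le_trans (le_abs_self _) (hgb w s hs)⟩
    have hSle : ∀ s, 0 ≤ s → ∀ w, g w s ≤ S s := fun s hs w =>
      le_csSup (hbdd s hs) (mem_range_self w)
    -- Lipschitz bound for S
    have hSstep : ∀ s₁ s₂ : ℝ, 0 ≤ s₁ → 0 ≤ s₂ → S s₁ ≤ S s₂ + 4 * M * |s₁ - s₂| := by
      intro s₁ s₂ h1 h2
      apply csSup_le (hne s₁)
      rintro _ ⟨w, rfl⟩
      have e1 : |u (w + h) s₁ - u (w + h) s₂| ≤ 2 * M * |s₁ - s₂| := by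
        rcases le_total s₁ s₂ with hc | hc
        · have h' := hlip (w + h) s₁ s₂ h1 hc
          rw [abs_sub_comm, abs_of_nonpos (by linarith : s₁ - s₂ ≤ 0)]
          linarith
        · have h' := hlip (w + h) s₂ s₁ h2 hc
          rw [abs_of_nonneg (by linarith : (0:ℝ) ≤ s₁ - s₂)]
          linarith
      have e2 : |u w s₁ - u w s₂| ≤ 2 * M * |s₁ - s₂| := by
        rcases le_total s₁ s₂ with hc | hc
        · have h' := hlip w s₁ s₂ h1 hc
          rw [abs_sub_comm, abs_of_nonpos (by linarith : s₁ - s₂ ≤ 0)]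
          linarith
        · have h' := hlip w s₂ s₁ h2 hc
          rw [abs_of_nonneg (by linarith : (0:ℝ) ≤ s₁ - s₂)]
          linarith
      have e3 := hSle s₂ h2 w
      have e1' := (abs_le.1 e1).2
      have e2' := (abs_le.1 e2).1
      have : g w s₁ ≤ g w s₂ + 4 * M * |s₁ - s₂| := by
        simp only [hg]; linarith
      linarith
    have hScont : ContinuousOn S (Icc 0 t) := by
      have hK : LipschitzOnWith (Real.toNNReal (4 * M)) S (Icc 0 t) := by
        apply LipschitzOnWith.of_dist_le_mul
        intro a ha b hb
        rw [Real.dist_eq, Real.dist_eq]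
        have k1 := hSstep a b ha.1 hb.1
        have k2 := hSstep b a hb.1 ha.1
        rw [abs_sub_comm b a] at k2
        have hcoe : ((Real.toNNReal (4 * M)) : ℝ) = 4 * M :=
          Real.coe_toNNReal _ (by linarith)
        rw [hcoe]
        rw [abs_le]
        constructor <;> linarith
      exact hK.continuousOn
    -- the primitive
    set P : ℝ → ℝ := fun s => ∫ r in (0:ℝ)..s, Real.exp r * S r with hP
    have hfc : ContinuousOn (fun r => Real.exp r * S r) (Icc 0 t) :=
      Real.continuous_exp.continuousOn.mul hScont
    have hPcont : ContinuousOn P (Icc 0 t) := by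
      have : IntegrableOn (fun r => Real.exp r * S r) (uIcc 0 t) := by
        rw [uIcc_of_le ht.le]
        exact hfc.integrableOn_Icc
      simpa [hP] using intervalIntegral.continuousOn_primitive_interval
        (a := 0) (b := t) (μ := volume) this |>.mono (by rw [uIcc_of_le ht.le])
    have hPderiv : ∀ s ∈ Ioo (0:ℝ) t, HasDerivAt P (Real.exp s * S s) s := by
      intro s hs
      have hii : IntervalIntegrable (fun r => Real.exp r * S r) volume 0 s := by
        apply ContinuousOn.intervalIntegrable
        rw [uIcc_of_le hs.1.le]
        exact hfc.mono (Icc_subset_Icc le_rfl hs.2.le)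
      have hfo : ContinuousOn (fun r => Real.exp r * S r) (Ioo 0 t) :=
        hfc.mono Ioo_subset_Icc_self
      exact intervalIntegral.integral_hasDerivAt_right hii
        (hfo.stronglyMeasurableAtFilter isOpen_Ioo s hs)
        (hfc.continuousAt (Icc_mem_nhds hs.1 hs.2))
    -- derivative of g w
    have hgderiv : ∀ w, ∀ s : ℝ, 0 < s →
        HasDerivAt (fun r => g w r) ((∫ z, g (w + z) s * μ z) - g w s) s := by
      intro w s hs
      have hs0 : (0:ℝ) ≤ s := hs.le
      have hd1 := hsol (w + h) s hs
      have hd2 := hsol w s hs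
      have hdsub := hd1.sub hd2
      have hcφ : Continuous fun z => u (w + h + z) s :=
        (hux s).comp (continuous_const.add continuous_id)
      have hcψ : Continuous fun z => u (w + z) s :=
        (hux s).comp (continuous_const.add continuous_id)
      have hBφ : ∀ z, |u (w + h + z) s| ≤ M := fun z => hub _ s hs0
      have hBψ : ∀ z, |u (w + z) s| ≤ M := fun z => hub _ s hs0
      have i1 : ∫ z, (u (w + h + z) s - u (w + h) s) * μ z
          = (∫ z, u (w + h + z) s * μ z) - u (w + h) s := by
        rw [hsplit2 _ _ hcφ continuous_const hBφ (fun _ => hub _ s hs0)]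
        rw [integral_const_mul, hμ1, mul_one]
      have i2 : ∫ z, (u (w + z) s - u w s) * μ z
          = (∫ z, u (w + z) s * μ z) - u w s := by
        rw [hsplit2 _ _ hcψ continuous_const hBψ (fun _ => hub _ s hs0)]
        rw [integral_const_mul, hμ1, mul_one]
      have i3 : ∫ z, g (w + z) s * μ z
          = (∫ z, u (w + h + z) s * μ z) - ∫ z, u (w + z) s * μ z := by
        have : (fun z => g (w + z) s * μ z)
            = fun z => (u (w + h + z) s - u (w + z) s) * μ z := by
          funext z
          simp only [hg]
          rw [add_right_comm w z h]
        rw [this, hsplit2 _ _ hcφ hcψ hBφ hBψ]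
      have : (∫ z, g (w + z) s * μ z) - g w s
          = (∫ z, (u (w + h + z) s - u (w + h) s) * μ z)
            - ∫ z, (u (w + z) s - u w s) * μ z := by
        rw [i1, i2, i3]; simp only [hg]; ring
      rw [this]
      exact hdsub
    -- key integral inequality
    have hkey3 : ∀ w, ∀ s : ℝ, 0 ≤ s → (∫ z, g (w + z) s * μ z) ≤ S s := by
      intro w s hs
      have hcg : Continuous fun z => g (w + z) s :=
        ((hux s).comp ((continuous_const.add continuous_id).add continuous_const)).sub
          ((hux s).comp (continuous_const.add continuous_id))
      have hBg : ∀ z, |g (w + z) s| ≤ 2 * M := fun z => hgb _ s hs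
      have h1 : Integrable (fun z => g (w + z) s * μ z) :=
        hμint.bdd_mul hcg.aestronglyMeasurable
          (ae_of_all _ (fun z => by simpa [Real.norm_eq_abs] using hBg z))
      have h2 : Integrable (fun z => S s * μ z) := hμint.const_mul _
      have := integral_mono h1 h2 (fun z =>
        mul_le_mul_of_nonneg_right (hSle s hs (w + z)) (hμ0 z))
      calc (∫ z, g (w + z) s * μ z) ≤ ∫ z, S s * μ z := this
        _ = S s := by rw [integral_const_mul, hμ1, mul_one]
    -- Φ antitone for each w
    have hΦ : ∀ w, ∀ s ∈ Icc (0:ℝ) t, Real.exp s * g w s ≤ C + P s := by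
      intro w s hsmem
      set Φ : ℝ → ℝ := fun r => Real.exp r * g w r - P r with hΦdef
      have hΦderiv : ∀ r ∈ Ioo (0:ℝ) t, HasDerivAt Φ
          (Real.exp r * ((∫ z, g (w + z) r * μ z) - S r)) r := by
        intro r hr
        have d1 := (Real.hasDerivAt_exp r).mul (hgderiv w r hr.1)
        have d2 := d1.sub (hPderiv r hr)
        exact d2.congr_deriv (by ring)
      have hΦanti : AntitoneOn Φ (Icc 0 t) := by
        apply antitoneOn_of_deriv_nonpos (convex_Icc 0 t)
        · exact (Real.continuous_exp.continuousOn.mul (hgt w).continuousOn).sub hPcont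
        · intro r hr
          rw [interior_Icc] at hr
          exact (hΦderiv r hr).differentiableAt.differentiableWithinAt
        · intro r hr
          rw [interior_Icc] at hr
          rw [(hΦderiv r hr).deriv]
          apply mul_nonpos_of_nonneg_of_nonpos (Real.exp_pos r).le
          exact sub_nonpos.2 (hkey3 w r hr.1.le)
      have h0mem : (0:ℝ) ∈ Icc (0:ℝ) t := ⟨le_rfl, ht.le⟩
      have := hΦanti h0mem hsmem hsmem.1
      have hΦ0 : Φ 0 = g w 0 := by
        simp [hΦdef, hP, Real.exp_zero]
      rw [hΦ0] at this
      have := le_trans this (hg0 w)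
      simp only [hΦdef] at this
      linarith
    -- sup version
    have hψ : ∀ s ∈ Icc (0:ℝ) t, Real.exp s * S s ≤ C + P s := by
      intro s hsmem
      have : S s ≤ Real.exp (-s) * (C + P s) := by
        apply csSup_le (hne s)
        rintro _ ⟨w, rfl⟩
        have h1 := hΦ w s hsmem
        have h2 : Real.exp (-s) * (Real.exp s * g w s) ≤ Real.exp (-s) * (C + P s) :=
          mul_le_mul_of_nonneg_left h1 (Real.exp_pos _).le
        rwa [← mul_assoc, ← Real.exp_add, neg_add_cancel, Real.exp_zero, one_mul] at h2
      calc Real.exp s * S s ≤ Real.exp s * (Real.exp (-s) * (C + P s)) :=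
            mul_le_mul_of_nonneg_left this (Real.exp_pos _).le
        _ = C + P s := by rw [← mul_assoc, ← Real.exp_add, add_neg_cancel, Real.exp_zero, one_mul]
    -- Ψ antitone
    set Ψ : ℝ → ℝ := fun s => Real.exp (-s) * (C + P s) with hΨdef
    have hΨderiv : ∀ s ∈ Ioo (0:ℝ) t, HasDerivAt Ψ
        (Real.exp (-s) * (Real.exp s * S s - (C + P s))) s := by
      intro s hs
      have dexp : HasDerivAt (fun r : ℝ => Real.exp (-r)) (-Real.exp (-s)) s := by
        have := (Real.hasDerivAt_exp (-s)).comp s (hasDerivAt_neg s)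
        simpa [Function.comp_def] using this
      have d2 := dexp.mul ((hasDerivAt_const s C).add (hPderiv s hs))
      exact d2.congr_deriv (by simp only [Pi.add_apply]; ring)
    have hΨanti : AntitoneOn Ψ (Icc 0 t) := by
      apply antitoneOn_of_deriv_nonpos (convex_Icc 0 t)
      · exact ((Real.continuous_exp.comp continuous_neg).continuousOn).mul
          (continuousOn_const.add hPcont)
      · intro r hr
        rw [interior_Icc] at hr
        exact (hΨderiv r hr).differentiableAt.differentiableWithinAt
      · intro r hr
        rw [interior_Icc] at hr
        rw [(hΨderiv r hr).deriv]
        apply mul_nonpos_of_nonneg_of_nonpos (Real.exp_pos _).le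
        exact sub_nonpos.2 (hψ r ⟨hr.1.le, hr.2.le⟩)
    have htmem : t ∈ Icc (0:ℝ) t := ⟨ht.le, le_rfl⟩
    have h0mem : (0:ℝ) ∈ Icc (0:ℝ) t := ⟨le_rfl, ht.le⟩
    have hΨt : Ψ t ≤ Ψ 0 := hΨanti h0mem htmem ht.le
    have hΨ0 : Ψ 0 = C := by simp [hΨdef, hP]
    -- conclude S t ≤ C
    have hfinal : S t ≤ C := by
      have h1 := hψ t htmem
      have h2 : C + P t ≤ C * Real.exp t := by
        rw [hΨ0] at hΨt
        have h3 : Real.exp t * (Real.exp (-t) * (C + P t)) ≤ Real.exp t * C :=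
          mul_le_mul_of_nonneg_left hΨt (Real.exp_pos _).le
        rw [← mul_assoc, ← Real.exp_add, add_neg_cancel, Real.exp_zero, one_mul] at h3
        linarith
      have h4 : Real.exp t * S t ≤ Real.exp t * C := by linarith
      exact le_of_mul_le_mul_left h4 (Real.exp_pos t)
    intro w
    exact le_trans (hSle t ht.le w) hfinal
  -- assemble
  have hd1 : ∀ w : Fin n → ℝ, dist (w + (x - y)) w ≤ η := by
    intro w
    have : dist (w + (x - y)) w = dist x y := by
      rw [dist_eq_norm, dist_eq_norm]
      congr 1
      abel
    rwa [this]
  have hd2 : ∀ w : Fin n → ℝ, dist (w + (y - x)) w ≤ η := by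
    intro w
    have : dist (w + (y - x)) w = dist x y := by
      rw [dist_eq_norm, dist_eq_norm, ← norm_neg]
      congr 1
      abel
    rwa [this]
  have m1 := main (x - y) hd1 y
  have m2 := main (y - x) hd2 x
  rw [show y + (x - y) = x by abel] at m1
  rw [show x + (y - x) = y by abel] at m2
  rw [abs_le]
  constructor <;> linarith
end

section
/- Let μ be a nonnegative L¹ function on ℝⁿ with total mass 1 and Ω ⊆ ℝⁿ open bounded. Define λ(η) = sup_{x,y ∈ Ω, |x−y| < η} μ(τ_x^{-1}Ω ∩ τ_y^{-1}Ω) and γ(η) = sup_{x,y ∈ Ω, |x−y| < η} μ(τ_x^{-1}Ω Δ τ_y^{-1}Ω), where τ_x^{-1}Ω = {z : x+z ∈ Ω}. Let u be a bounded continuous solution of the homogeneous Dirichlet problem (φ = 0) with initial data u₀ ∈ C₀(Ω̄) having modulus of continuity ω₀. If λ(η) < 1, then for all t > 0, ω(η,t) ≤ (ω₀(η) + γ(η)·‖u₀‖_∞·(e^{(1−λ(η))t} − 1)/(1−λ(η)))·e^{(λ(η)−1)t}, where ω(η,t) = sup_{x,y ∈ Ω, |x−y| < η} |u(x,t) − u(y,t)|.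 -/
open MeasureTheory Set Real

/-- `λ(η) = sup_{x,y ∈ Ω, |x−y| < η} μ(τ_x^{-1}Ω ∩ τ_y^{-1}Ω)`. -/
noncomputable def lamQ (n : ℕ) (μ : (Fin n → ℝ) → ℝ) (Ω : Set (Fin n → ℝ)) (η : ℝ) : ℝ :=
  sSup {r | ∃ x ∈ Ω, ∃ y ∈ Ω, dist x y < η ∧
    r = ∫ z in {z | x + z ∈ Ω} ∩ {z | y + z ∈ Ω}, μ z}

/-- `γ(η) = sup_{x,y ∈ Ω, |x−y| < η} μ(τ_x^{-1}Ω Δ τ_y^{-1}Ω)`. -/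
noncomputable def gamQ (n : ℕ) (μ : (Fin n → ℝ) → ℝ) (Ω : Set (Fin n → ℝ)) (η : ℝ) : ℝ :=
  sSup {r | ∃ x ∈ Ω, ∃ y ∈ Ω, dist x y < η ∧
    r = ∫ z in ({z | x + z ∈ Ω} \ {z | y + z ∈ Ω}) ∪ ({z | y + z ∈ Ω} \ {z | x + z ∈ Ω}), μ z}

open Filter Topology

lemma le_add_all_pos {a b : ℝ} (h : ∀ ε > 0, a ≤ b + ε) : a ≤ b := by
  by_contra hc; push_neg at hc
  linarith [h ((a - b)/2) (by linarith)]

lemma mvt_upper {f g : ℝ → ℝ} {t s c : ℝ} (hts : t ≤ s)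
    (hc : ContinuousOn f (Icc t s)) (hd : ∀ σ ∈ Ioo t s, HasDerivAt f (g σ) σ)
    (hle : ∀ σ ∈ Ioo t s, g σ ≤ c) : f s - f t ≤ c * (s - t) := by
  rcases eq_or_lt_of_le hts with rfl | hts'
  · simp
  have key : AntitoneOn (fun σ => f σ - c * σ) (Icc t s) := by
    apply antitoneOn_of_hasDerivWithinAt_nonpos (convex_Icc t s)
      (f' := fun σ => g σ - c)
    · exact hc.sub (continuousOn_const.mul continuousOn_id)
    · intro σ hσ
      rw [interior_Icc] at hσ
      have : HasDerivAt (fun σ => f σ - c * σ) (g σ - c * 1) σ :=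
        (hd σ hσ).sub ((hasDerivAt_id σ).const_mul c)
      simpa using this.hasDerivWithinAt
    · intro σ hσ
      rw [interior_Icc] at hσ
      linarith [hle σ hσ]
  have h2 := key (left_mem_Icc.2 hts) (right_mem_Icc.2 hts) hts
  dsimp at h2
  linarith

lemma gronwall_sup {ι : Type*} [Nonempty ι] (v v' : ι → ℝ → ℝ)
    (a b K : ℝ) (ha0 : 0 ≤ a)
    (hcont : ∀ i, ContinuousOn (v i) (Ici 0))
    (hderiv : ∀ i t, 0 < t → HasDerivAt (v i) (v' i t) t)
    (hbdd : ∀ i t, 0 ≤ t → |v i t| ≤ K)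
    (hbdd' : ∀ i t, 0 < t → |v' i t| ≤ K)
    (hequi : ∀ t, 0 ≤ t → ∀ ε, 0 < ε →
      ∃ δ > 0, ∀ s, 0 ≤ s → |s - t| < δ → ∀ i, |v i s - v i t| ≤ ε)
    (hslope : ∀ i t, 0 < t → v' i t ≤ a * sSup (Set.range fun j => v j t) + b - v i t)
    (B B' : ℝ → ℝ) (hB0 : sSup (Set.range fun j => v j 0) < B 0)
    (hB' : ∀ s, HasDerivAt B (B' s) s)
    (hBgt : ∀ s, 0 ≤ s → (a - 1) * B s + b < B' s) :
    ∀ t, 0 ≤ t → sSup (Set.range fun j => v j t) ≤ B t := by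
  set H : ℝ → ℝ := fun t => sSup (Set.range fun j => v j t) with hHdef
  have hK : 0 ≤ K := le_trans (abs_nonneg _) (hbdd (Classical.arbitrary ι) 0 le_rfl)
  have hbr : ∀ t, 0 ≤ t → BddAbove (Set.range fun j => v j t) := by
    intro t ht
    exact ⟨K, by rintro _ ⟨j, rfl⟩; exact (abs_le.1 (hbdd j t ht)).2⟩
  have hle_H : ∀ i t, 0 ≤ t → v i t ≤ H t := fun i t ht => le_csSup (hbr t ht) ⟨i, rfl⟩
  have hH_le : ∀ t c, (∀ i, v i t ≤ c) → H t ≤ c := by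
    intro t c h
    exact csSup_le (range_nonempty _) (by rintro _ ⟨j, rfl⟩; exact h j)
  have hHcont : ContinuousOn H (Ici 0) := by
    intro t ht
    rw [Metric.continuousWithinAt_iff]
    intro ε hε
    obtain ⟨δ, hδ, hδ'⟩ := hequi t ht (ε/2) (by positivity)
    refine ⟨δ, hδ, fun s hs hst => ?_⟩
    rw [Real.dist_eq] at hst
    have h1 : H s ≤ H t + ε/2 := by
      apply hH_le
      intro i
      have := hδ' s hs hst i
      have h2 := hle_H i t ht
      have := abs_le.1 this
      linarith [this.2]
    have h2 : H t ≤ H s + ε/2 := by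
      apply hH_le
      intro i
      have := abs_le.1 (hδ' s hs hst i)
      linarith [hle_H i s hs, this.1]
    rw [Real.dist_eq]
    rw [abs_lt]
    constructor <;> linarith
  have han : ∀ t, 0 ≤ t → ∀ r, (a - 1) * H t + b < r →
      ∀ᶠ s in 𝓝[>] t, slope H t s < r := by
    intro t ht r hr
    set ε := r - ((a - 1) * H t + b) with hεdef
    have hε : 0 < ε := by simp [hεdef]; linarith
    set ε₁ := ε / (4 * (a + 1)) with hε₁def
    have hε₁ : 0 < ε₁ := by positivity
    obtain ⟨δ₁, hδ₁, hδ₁'⟩ := hequi t ht ε₁ hε₁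
    set δ := min δ₁ (min 1 (ε / (4 * (K + 1)))) with hδdef
    have hδ0 : 0 < δ := lt_min hδ₁ (lt_min one_pos (by positivity))
    have hδle1 : δ ≤ 1 := le_trans (min_le_right _ _) (min_le_left _ _)
    have hδleδ₁ : δ ≤ δ₁ := min_le_left _ _
    have hδleK : δ ≤ ε / (4 * (K + 1)) := le_trans (min_le_right _ _) (min_le_right _ _)
    filter_upwards [Ioo_mem_nhdsGT (by linarith : t < t + δ)]
    intro s hs
    have hst : t < s := hs.1
    have hs0 : 0 ≤ s := le_trans ht hst.le
    have hsδ : s - t < δ := by linarith [hs.2]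
    set D := a * (H t + ε₁) + b + K * δ with hDdef
    have hv_s : ∀ i, v i s ≤ H t + (s - t) * (D - H t) := by
      intro i
      have hlow : ∀ σ ∈ Icc t s, v i t - K * (σ - t) ≤ v i σ := by
        intro σ hσ
        rcases eq_or_lt_of_le hσ.1 with rfl | htσ
        · simp
        have hIcc : Icc t σ ⊆ Ici (0:ℝ) := fun τ hτ => le_trans ht hτ.1
        have := mvt_upper (f := fun τ => -(v i τ)) (g := fun τ => -(v' i τ))
          (c := K) htσ.le (((hcont i).mono hIcc).neg)
          (fun τ hτ => (hderiv i τ (lt_of_le_of_lt ht hτ.1)).neg)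
          (fun τ hτ => by
            have h := abs_le.1 (hbdd' i τ (lt_of_le_of_lt ht hτ.1))
            show -(v' i τ) ≤ K
            linarith [h.1])
        linarith
      have hupper : ∀ σ ∈ Ioo t s, v' i σ ≤ D - v i t := by
        intro σ hσ
        have hσ0 : 0 < σ := lt_of_le_of_lt ht hσ.1
        have h1 : v' i σ ≤ a * H σ + b - v i σ := hslope i σ hσ0
        have h2 : H σ ≤ H t + ε₁ := by
          apply hH_le
          intro j
          have habs : |σ - t| < δ₁ := by
            rw [abs_of_pos (by linarith [hσ.1] : (0:ℝ) < σ - t)]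
            have : σ - t < δ := by linarith [hσ.2]
            linarith
          have := abs_le.1 (hδ₁' σ hσ0.le habs j)
          linarith [hle_H j t ht, this.2]
        have h3 : v i t - K * (σ - t) ≤ v i σ := hlow σ ⟨hσ.1.le, hσ.2.le⟩
        have h4 : K * (σ - t) ≤ K * δ := by
          apply mul_le_mul_of_nonneg_left _ hK
          linarith [hσ.2]
        have h5 : a * H σ ≤ a * (H t + ε₁) := mul_le_mul_of_nonneg_left h2 ha0
        rw [hDdef]
        linarith
      have hIcc : Icc t s ⊆ Ici (0:ℝ) := fun τ hτ => le_trans ht hτ.1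
      have hm := mvt_upper (c := D - v i t) hst.le ((hcont i).mono hIcc)
        (fun σ hσ => hderiv i σ (lt_of_le_of_lt ht hσ.1)) hupper
      have h6 : v i t * (1 - (s - t)) ≤ H t * (1 - (s - t)) := by
        apply mul_le_mul_of_nonneg_right (hle_H i t ht)
        have : s - t < 1 := lt_of_lt_of_le hsδ hδle1
        linarith
      nlinarith [hm, h6]
    have hHs : H s ≤ H t + (s - t) * (D - H t) := hH_le _ _ hv_s
    rw [slope_def_field, div_lt_iff₀ (by linarith : (0:ℝ) < s - t)]
    have hq1 : a * ε₁ ≤ ε / 4 := by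
      rw [hε₁def]
      rw [mul_div_assoc']
      rw [div_le_div_iff₀ (by positivity) (by norm_num)]
      nlinarith [hε.le]
    have hq2 : K * δ ≤ ε / 4 := by
      have : K * δ ≤ K * (ε / (4 * (K + 1))) := mul_le_mul_of_nonneg_left hδleK hK
      have h2 : K * (ε / (4 * (K + 1))) ≤ ε / 4 := by
        rw [mul_div_assoc']
        rw [div_le_div_iff₀ (by positivity) (by norm_num)]
        nlinarith [hε.le]
      linarith
    have hDlt : D - H t < r := by
      rw [hDdef]
      have : r = (a - 1) * H t + b + ε := by rw [hεdef]; ring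
      rw [this]
      nlinarith [hq1, hq2, hε]
    nlinarith [hHs, hDlt, hst]
  intro t ht
  have := image_le_of_liminf_slope_right_lt_deriv_boundary (a := 0) (b := t)
    (f := H) (f' := fun s => (a - 1) * H s + b) (B := B) (B' := B')
    (hHcont.mono (Icc_subset_Ici_self))
    (fun x hx r hr => (han x hx.1 r hr).frequently)
    hB0.le hB'
    (fun x hx heq => by show (a - 1) * H x + b < B' x; rw [heq]; exact hBgt x hx.1)
  exact this (right_mem_Icc.2 ht)
/-- decay of the modulus of continuity in a bounded domain when `λ(η) < 1`:
`ω(η,t) ≤ (ω₀(η) + γ(η)‖u₀‖_∞ (e^{(1−λ)t} − 1)/(1−λ)) e^{(λ−1)t}`. -/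
theorem modulus_decay_lam_lt_one (n : ℕ) (μ : (Fin n → ℝ) → ℝ) (Ω : Set (Fin n → ℝ))
    (hμ0 : ∀ z, 0 ≤ μ z) (hμint : Integrable μ) (hμ1 : ∫ z, μ z = 1)
    (hΩo : IsOpen Ω) (hΩb : Bornology.IsBounded Ω)
    (u : (Fin n → ℝ) → ℝ → ℝ) (u₀ : (Fin n → ℝ) → ℝ)
    (huc : ContinuousOn (fun p : (Fin n → ℝ) × ℝ => u p.1 p.2) (closure Ω ×ˢ Set.Ici (0:ℝ)))
    (M : ℝ) (hub : ∀ x ∈ closure Ω, ∀ t ≥ (0:ℝ), |u x t| ≤ M)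
    (hu0 : ∀ x ∈ closure Ω, u x 0 = u₀ x)
    (hu₀c : ContinuousOn u₀ (closure Ω)) (hu₀0 : ∀ x ∈ frontier Ω, u₀ x = 0)
    (hsol : ∀ x ∈ Ω, ∀ t > (0:ℝ),
      HasDerivAt (fun s => u x s)
        ((∫ z in {z | x + z ∈ Ω}, u (x + z) t * μ z) - u x t) t)
    (C : ℝ) (hC : ∀ x ∈ closure Ω, |u₀ x| ≤ C)
    (η : ℝ) (hη : 0 < η) (ω₀η : ℝ)
    (hmod : ∀ x ∈ Ω, ∀ y ∈ Ω, dist x y < η → |u₀ x - u₀ y| ≤ ω₀η)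
    (hlam : lamQ n μ Ω η < 1) :
    ∀ t > (0:ℝ), ∀ x ∈ Ω, ∀ y ∈ Ω, dist x y < η →
      |u x t - u y t| ≤
        (ω₀η + gamQ n μ Ω η * C *
          (Real.exp ((1 - lamQ n μ Ω η) * t) - 1) / (1 - lamQ n μ Ω η)) *
        Real.exp ((lamQ n μ Ω η - 1) * t) := by
  intro t ht x₀ hx₀ y₀ hy₀ hd₀
  have hM0 : 0 ≤ M := le_trans (abs_nonneg _) (hub x₀ (subset_closure hx₀) 0 le_rfl)
  have hC0 : 0 ≤ C := le_trans (abs_nonneg _) (hC x₀ (subset_closure hx₀))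
  set l := lamQ n μ Ω η with hldef
  set gm := gamQ n μ Ω η with hgmdef
  set A : (Fin n → ℝ) → Set (Fin n → ℝ) := fun x => {z | x + z ∈ Ω} with hAdef
  have hAmeas : ∀ x, MeasurableSet (A x) := fun x =>
    (IsOpen.preimage (continuous_const.add continuous_id) hΩo).measurableSet
  have hμS_le : ∀ S : Set (Fin n → ℝ), ∫ z in S, μ z ≤ 1 := by
    intro S; rw [← hμ1]; exact setIntegral_le_integral hμint (ae_of_all _ hμ0)
  have hμS0 : ∀ S : Set (Fin n → ℝ), 0 ≤ ∫ z in S, μ z := fun S => integral_nonneg hμ0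
  have hlam_mem : ∀ x ∈ Ω, ∀ y ∈ Ω, dist x y < η →
      ∫ z in A x ∩ A y, μ z ≤ l := by
    intro x hx y hy hdist
    rw [hldef, lamQ]
    refine le_csSup ⟨1, ?_⟩ ⟨x, hx, y, hy, hdist, rfl⟩
    rintro r ⟨x, hx, y, hy, hd, rfl⟩; exact hμS_le _
  have hgam_mem : ∀ x ∈ Ω, ∀ y ∈ Ω, dist x y < η →
      ∫ z in (A x \ A y) ∪ (A y \ A x), μ z ≤ gm := by
    intro x hx y hy hdist
    rw [hgmdef, gamQ]
    refine le_csSup ⟨1, ?_⟩ ⟨x, hx, y, hy, hdist, rfl⟩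
    rintro r ⟨x, hx, y, hy, hd, rfl⟩; exact hμS_le _
  have hη' : dist x₀ x₀ < η := by simpa using hη
  have hlam0 : (0:ℝ) ≤ l := le_trans (hμS0 _) (hlam_mem x₀ hx₀ x₀ hx₀ hη')
  have hgam0 : (0:ℝ) ≤ gm := le_trans (hμS0 _) (hgam_mem x₀ hx₀ x₀ hx₀ hη')
  -- continuity of time sections
  have hcO : ∀ x ∈ closure Ω, ContinuousOn (fun s => u x s) (Ici (0:ℝ)) := by
    intro x hx
    have h1 : ContinuousOn (fun s : ℝ => ((x, s) : (Fin n → ℝ) × ℝ)) (Ici 0) :=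
      (continuous_const.prodMk continuous_id).continuousOn
    exact huc.comp h1 (fun s hs => ⟨hx, hs⟩)
  -- uniform continuity in time
  have hUC : ∀ t', 0 ≤ t' → ∀ ε, 0 < ε → ∃ δ > 0, ∀ s, 0 ≤ s → |s - t'| < δ →
      ∀ x ∈ closure Ω, |u x s - u x t'| ≤ ε := by
    intro t' ht' ε hε
    have hcomp : IsCompact ((closure Ω) ×ˢ Icc (0:ℝ) (t' + 1)) :=
      (hΩb.isCompact_closure).prod isCompact_Icc
    have hucK := hcomp.uniformContinuousOn_of_continuous
      (huc.mono (prod_mono_right Icc_subset_Ici_self))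
    rw [Metric.uniformContinuousOn_iff] at hucK
    obtain ⟨δ', hδ', hδ''⟩ := hucK ε hε
    refine ⟨min δ' 1, lt_min hδ' one_pos, fun s hs hst x hx => ?_⟩
    have h1 : |s - t'| < 1 := lt_of_lt_of_le hst (min_le_right _ _)
    have h1' := abs_lt.1 h1
    have hmem1 : ((x, s) : (Fin n → ℝ) × ℝ) ∈ (closure Ω) ×ˢ Icc (0:ℝ) (t'+1) :=
      ⟨hx, hs, by linarith [h1'.2]⟩
    have hmem2 : ((x, t') : (Fin n → ℝ) × ℝ) ∈ (closure Ω) ×ˢ Icc (0:ℝ) (t'+1) :=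
      ⟨hx, ht', by linarith⟩
    have hdist : dist ((x, s) : (Fin n → ℝ) × ℝ) ((x, t')) < δ' := by
      rw [Prod.dist_eq]
      have : dist s t' < δ' := by
        rw [Real.dist_eq]; exact lt_of_lt_of_le hst (min_le_left _ _)
      exact max_lt (by simpa using hδ') this
    have := hδ'' _ hmem1 _ hmem2 hdist
    rw [Real.dist_eq] at this
    exact this.le
  -- integrability
  have hIu : ∀ x ∈ Ω, ∀ t' ≥ (0:ℝ), IntegrableOn (fun z => u (x + z) t' * μ z) (A x) := by
    intro x hx t' ht'
    have hcz : ContinuousOn (fun z => u (x + z) t') (A x) := by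
      have h1 : ContinuousOn (fun z => ((x + z, t') : (Fin n → ℝ) × ℝ)) (A x) :=
        ((continuous_const.add continuous_id).prodMk continuous_const).continuousOn
      exact huc.comp h1 (fun z hz => ⟨subset_closure hz, ht'⟩)
    have hmeas : AEStronglyMeasurable (fun z => u (x + z) t' * μ z) (volume.restrict (A x)) :=
      (hcz.aestronglyMeasurable (hAmeas x)).mul (hμint.aestronglyMeasurable.restrict)
    apply Integrable.mono' ((hμint.const_mul M).integrableOn) hmeas
    rw [ae_restrict_iff' (hAmeas x)]
    filter_upwards with z hz
    rw [Real.norm_eq_abs, abs_mul, abs_of_nonneg (hμ0 z)]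
    exact mul_le_mul_of_nonneg_right (hub _ (subset_closure hz) t' ht') (hμ0 z)
  have hIb : ∀ x ∈ Ω, ∀ t' ≥ (0:ℝ), |∫ z in A x, u (x + z) t' * μ z| ≤ M := by
    intro x hx t' ht'
    have h1 : |∫ z in A x, u (x + z) t' * μ z| ≤ ∫ z in A x, |u (x + z) t' * μ z| := by
      simpa [Real.norm_eq_abs, abs_mul] using
        norm_integral_le_integral_norm (μ := volume.restrict (A x))
          (fun z => u (x + z) t' * μ z)
    have h2 : ∫ z in A x, |u (x + z) t' * μ z| ≤ ∫ z in A x, M * μ z := by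
      apply setIntegral_mono_on ((hIu x hx t' ht').abs)
        ((hμint.const_mul M).integrableOn) (hAmeas x)
      intro z hz
      rw [abs_mul, abs_of_nonneg (hμ0 z)]
      exact mul_le_mul_of_nonneg_right (hub _ (subset_closure hz) t' ht') (hμ0 z)
    have h3 : ∫ z in A x, M * μ z = M * ∫ z in A x, μ z := integral_const_mul M _
    have h4 : M * ∫ z in A x, μ z ≤ M * 1 := mul_le_mul_of_nonneg_left (hμS_le _) hM0
    linarith
  -- maximum principle
  haveI : Nonempty ↥Ω := Set.Nonempty.to_subtype ⟨x₀, hx₀⟩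
  set vM : (↥Ω × Bool) → ℝ → ℝ :=
    fun i s => if i.2 then u i.1 s else -(u i.1 s) with hvMdef
  set vM' : (↥Ω × Bool) → ℝ → ℝ := fun i s =>
    if i.2 then (∫ z in A i.1, u (↑i.1 + z) s * μ z) - u i.1 s
    else -((∫ z in A i.1, u (↑i.1 + z) s * μ z) - u i.1 s) with hvM'def
  have hvMb : ∀ (i : ↥Ω × Bool) (t' : ℝ), 0 ≤ t' → |vM i t'| ≤ 2 * M := by
    rintro ⟨⟨x, hx⟩, b⟩ t' ht'
    have h2 := hub x (subset_closure hx) t' ht'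
    cases b <;> simp only [hvMdef, if_true, if_false, Bool.false_eq_true, abs_neg] <;> linarith
  have hmb : ∀ t' : ℝ, 0 ≤ t' → BddAbove (Set.range fun j => vM j t') := by
    intro t' ht'
    exact ⟨2 * M, by rintro r ⟨j, rfl⟩; exact (abs_le.1 (hvMb j t' ht')).2⟩
  have hmu : ∀ x (hx : x ∈ Ω), ∀ t', 0 ≤ t' →
      |u x t'| ≤ sSup (Set.range fun j => vM j t') := by
    intro x hx t' ht'
    have h1 : u x t' ≤ sSup (Set.range fun j => vM j t') :=
      le_csSup (hmb t' ht') ⟨(⟨x, hx⟩, true), rfl⟩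
    have h2 : -(u x t') ≤ sSup (Set.range fun j => vM j t') :=
      le_csSup (hmb t' ht') ⟨(⟨x, hx⟩, false), rfl⟩
    exact abs_le.2 ⟨by linarith, h1⟩
  have hm0 : ∀ t', 0 ≤ t' → 0 ≤ sSup (Set.range fun j => vM j t') :=
    fun t' ht' => le_trans (abs_nonneg _) (hmu x₀ hx₀ t' ht')
  have hIm : ∀ x (hx : x ∈ Ω), ∀ t', 0 ≤ t' →
      |∫ z in A x, u (x + z) t' * μ z| ≤ sSup (Set.range fun j => vM j t') := by
    intro x hx t' ht'
    set m := sSup (Set.range fun j => vM j t') with hmdef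
    have h1 : |∫ z in A x, u (x + z) t' * μ z| ≤ ∫ z in A x, |u (x + z) t' * μ z| := by
      simpa [Real.norm_eq_abs, abs_mul] using
        norm_integral_le_integral_norm (μ := volume.restrict (A x))
          (fun z => u (x + z) t' * μ z)
    have h2 : ∫ z in A x, |u (x + z) t' * μ z| ≤ ∫ z in A x, m * μ z := by
      apply setIntegral_mono_on ((hIu x hx t' ht').abs)
        ((hμint.const_mul m).integrableOn) (hAmeas x)
      intro z hz
      rw [abs_mul, abs_of_nonneg (hμ0 z)]
      exact mul_le_mul_of_nonneg_right (hmu _ hz t' ht') (hμ0 z)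
    have h3 : ∫ z in A x, m * μ z = m * ∫ z in A x, μ z := integral_const_mul m _
    have h4 : m * ∫ z in A x, μ z ≤ m * 1 :=
      mul_le_mul_of_nonneg_left (hμS_le _) (hm0 t' ht')
    linarith
  have hmax : ∀ x ∈ Ω, ∀ t', 0 ≤ t' → |u x t'| ≤ C := by
    have key : ∀ t', 0 ≤ t' → sSup (Set.range fun j => vM j t') ≤ C := by
      intro t' ht'
      apply le_add_all_pos
      intro ε hε
      have h1t : (0:ℝ) < 1 + t' := by linarith
      set δ := ε / (1 + t') with hδdef
      have hδ0 : 0 < δ := div_pos hε h1t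
      have hgron := gronwall_sup vM vM' 1 0 (2 * M) zero_le_one
        (by
          rintro ⟨⟨x, hx⟩, b⟩
          have hc := hcO x (subset_closure hx)
          cases b <;> simp only [hvMdef, if_true, if_false, Bool.false_eq_true]
          · exact hc.neg
          · exact hc)
        (by
          rintro ⟨⟨x, hx⟩, b⟩ s hs
          have hd := hsol x hx s hs
          cases b <;> simp only [hvMdef, hvM'def, if_true, if_false, Bool.false_eq_true]
          · exact hd.neg
          · exact hd)
        hvMb
        (by
          rintro ⟨⟨x, hx⟩, b⟩ s hs
          have h1 := hIb x hx s hs.le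
          have h2 := hub x (subset_closure hx) s hs.le
          have h1' := abs_le.1 h1
          have h2' := abs_le.1 h2
          cases b <;>
            simp only [hvM'def, if_true, if_false, Bool.false_eq_true, abs_neg] <;>
            · rw [abs_le]; constructor <;> linarith)
        (by
          intro t'' ht'' ε' hε'
          obtain ⟨δ', hδ', hδ''⟩ := hUC t'' ht'' ε' hε'
          refine ⟨δ', hδ', fun s hs hst => ?_⟩
          rintro ⟨⟨x, hx⟩, b⟩
          have := hδ'' s hs hst x (subset_closure hx)
          cases b <;>
            simp only [hvMdef, if_true, if_false, Bool.false_eq_true, neg_sub_neg] <;>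
            [(rwa [abs_sub_comm] at this); exact this])
        (by
          rintro ⟨⟨x, hx⟩, b⟩ s hs
          have h1 := hIm x hx s hs.le
          have h1' := abs_le.1 h1
          cases b <;>
            simp only [hvMdef, hvM'def, if_true, if_false, Bool.false_eq_true, one_mul] <;>
            linarith [h1'.1, h1'.2])
        (fun s => C + δ * (1 + s)) (fun _ => δ)
        (by
          have h0 : sSup (Set.range fun j => vM j 0) ≤ C := by
            apply csSup_le (range_nonempty _)
            rintro r ⟨⟨⟨x, hx⟩, b⟩, rfl⟩
            have h2' : |u x 0| ≤ C := by
              rw [hu0 x (subset_closure hx)]; exact hC x (subset_closure hx)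
            have h2 := abs_le.1 h2'
            cases b <;> simp only [hvMdef, if_true, if_false, Bool.false_eq_true] <;> linarith
          have : (0:ℝ) < δ * (1 + 0) := by norm_num [hδ0]
          linarith)
        (by
          intro s
          have h := (((hasDerivAt_const s (1:ℝ)).add (hasDerivAt_id s)).const_mul δ).const_add C
          simpa using h)
        (by intro s hs; norm_num [hδ0])
        t' ht'
      have : δ * (1 + t') = ε := by rw [hδdef]; field_simp
      linarith
    intro x hx t' ht'
    exact le_trans (hmu x hx t' ht') (key t' ht')
  -- pair family
  haveI : Nonempty {p : (Fin n → ℝ) × (Fin n → ℝ) // p.1 ∈ Ω ∧ p.2 ∈ Ω ∧ dist p.1 p.2 < η} :=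
    ⟨⟨(x₀, x₀), hx₀, hx₀, hη'⟩⟩
  set vP : {p : (Fin n → ℝ) × (Fin n → ℝ) // p.1 ∈ Ω ∧ p.2 ∈ Ω ∧ dist p.1 p.2 < η} → ℝ → ℝ :=
    fun p s => u p.1.1 s - u p.1.2 s with hvPdef
  set vP' : {p : (Fin n → ℝ) × (Fin n → ℝ) // p.1 ∈ Ω ∧ p.2 ∈ Ω ∧ dist p.1 p.2 < η} → ℝ → ℝ :=
    fun p s =>
      ((∫ z in A p.1.1, u (p.1.1 + z) s * μ z) - u p.1.1 s) -
      ((∫ z in A p.1.2, u (p.1.2 + z) s * μ z) - u p.1.2 s) with hvP'def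
  have hvPb : ∀ p (t' : ℝ), 0 ≤ t' → |vP p t'| ≤ 4 * M := by
    rintro ⟨⟨x, y⟩, hx, hy, hdxy⟩ t' ht'
    have h1 := abs_le.1 (hub x (subset_closure hx) t' ht')
    have h2 := abs_le.1 (hub y (subset_closure hy) t' ht')
    have he : vP ⟨(x, y), hx, hy, hdxy⟩ t' = u x t' - u y t' := rfl
    rw [he, abs_le]; constructor <;> linarith
  have hWb : ∀ t' : ℝ, 0 ≤ t' → BddAbove (Set.range fun j => vP j t') :=
    fun t' ht' => ⟨4 * M, by rintro r ⟨j, rfl⟩; exact (abs_le.1 (hvPb j t' ht')).2⟩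
  have hWle : ∀ p (t' : ℝ), 0 ≤ t' → vP p t' ≤ sSup (Set.range fun j => vP j t') :=
    fun p t' ht' => le_csSup (hWb t' ht') ⟨p, rfl⟩
  have hW0 : ∀ t', 0 ≤ t' → 0 ≤ sSup (Set.range fun j => vP j t') := by
    intro t' ht'
    have h := hWle ⟨(x₀, x₀), hx₀, hx₀, hη'⟩ t' ht'
    have he : vP ⟨(x₀, x₀), hx₀, hx₀, hη'⟩ t' = u x₀ t' - u x₀ t' := rfl
    rw [he] at h; linarith
  have hdistadd : ∀ x y z : Fin n → ℝ, dist (x + z) (y + z) = dist x y := by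
    intro x y z; rw [dist_eq_norm, dist_eq_norm, add_sub_add_right_eq_sub]
  have hslopeP : ∀ p (t' : ℝ), 0 < t' →
      vP' p t' ≤ l * sSup (Set.range fun j => vP j t') + gm * C - vP p t' := by
    rintro ⟨⟨x, y⟩, hx, hy, hdxy⟩ t' ht'
    have ht'0 : (0:ℝ) ≤ t' := ht'.le
    set W := sSup (Set.range fun j => vP j t') with hWdef
    have hIx : IntegrableOn (fun z => u (x + z) t' * μ z) (A x) := hIu x hx t' ht'0
    have hIy : IntegrableOn (fun z => u (y + z) t' * μ z) (A y) := hIu y hy t' ht'0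
    have hmxy : MeasurableSet (A x ∩ A y) := (hAmeas x).inter (hAmeas y)
    have hmd1 : MeasurableSet (A x \ A y) := (hAmeas x).diff (hAmeas y)
    have hmd2 : MeasurableSet (A y \ A x) := (hAmeas y).diff (hAmeas x)
    have e1 : ∫ z in A x, u (x + z) t' * μ z =
        (∫ z in A x ∩ A y, u (x + z) t' * μ z) + ∫ z in A x \ A y, u (x + z) t' * μ z := by
      rw [← setIntegral_union (Disjoint.mono_left inter_subset_right disjoint_sdiff_self_right)
        hmd1 (hIx.mono_set inter_subset_left) (hIx.mono_set diff_subset), inter_union_diff]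
    have e2 : ∫ z in A y, u (y + z) t' * μ z =
        (∫ z in A x ∩ A y, u (y + z) t' * μ z) + ∫ z in A y \ A x, u (y + z) t' * μ z := by
      rw [← setIntegral_union (Disjoint.mono_left inter_subset_left disjoint_sdiff_self_right)
        hmd2 (hIy.mono_set inter_subset_right) (hIy.mono_set diff_subset)]
      rw [show A x ∩ A y ∪ A y \ A x = A y by rw [inter_comm, inter_union_diff]]
    have e3 : (∫ z in A x ∩ A y, u (x + z) t' * μ z) - ∫ z in A x ∩ A y, u (y + z) t' * μ z
        = ∫ z in A x ∩ A y, (u (x + z) t' - u (y + z) t') * μ z := by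
      rw [← integral_sub (hIx.mono_set inter_subset_left) (hIy.mono_set inter_subset_right)]
      congr 1; ext z; ring
    have b1 : ∫ z in A x ∩ A y, (u (x + z) t' - u (y + z) t') * μ z ≤ W * l := by
      have s1 : ∫ z in A x ∩ A y, (u (x + z) t' - u (y + z) t') * μ z
          ≤ ∫ z in A x ∩ A y, W * μ z := by
        refine setIntegral_mono_on ?_ ((hμint.const_mul W).integrableOn) hmxy ?_
        · have h := (hIx.mono_set (inter_subset_left (t := A y))).sub
            (hIy.mono_set (inter_subset_right (s := A x)))
          refine h.congr_fun (fun z _ => ?_) hmxy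
          simp only [Pi.sub_apply]; ring
        · intro z hz
          have hq : u (x + z) t' - u (y + z) t' ≤ W := by
            have h := hWle ⟨(x + z, y + z), hz.1, hz.2, by rw [hdistadd]; exact hdxy⟩ t' ht'0
            exact h
          exact mul_le_mul_of_nonneg_right hq (hμ0 z)
      have s2 : ∫ z in A x ∩ A y, W * μ z = W * ∫ z in A x ∩ A y, μ z := integral_const_mul W _
      have s3 : W * ∫ z in A x ∩ A y, μ z ≤ W * l :=
        mul_le_mul_of_nonneg_left (hlam_mem x hx y hy hdxy) (hW0 t' ht'0)
      linarith
    have b2 : ∫ z in A x \ A y, u (x + z) t' * μ z ≤ C * ∫ z in A x \ A y, μ z := by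
      have s1 : ∫ z in A x \ A y, u (x + z) t' * μ z ≤ ∫ z in A x \ A y, C * μ z := by
        refine setIntegral_mono_on (hIx.mono_set diff_subset)
          ((hμint.const_mul C).integrableOn) hmd1 ?_
        intro z hz
        exact mul_le_mul_of_nonneg_right (abs_le.1 (hmax _ hz.1 t' ht'0)).2 (hμ0 z)
      rw [integral_const_mul] at s1; exact s1
    have b3 : -(C * ∫ z in A y \ A x, μ z) ≤ ∫ z in A y \ A x, u (y + z) t' * μ z := by
      have s1 : ∫ z in A y \ A x, (-C) * μ z ≤ ∫ z in A y \ A x, u (y + z) t' * μ z := by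
        refine setIntegral_mono_on ((hμint.const_mul (-C)).integrableOn)
          (hIy.mono_set diff_subset) hmd2 ?_
        intro z hz
        exact mul_le_mul_of_nonneg_right (abs_le.1 (hmax _ hz.1 t' ht'0)).1 (hμ0 z)
      rw [integral_const_mul] at s1; linarith
    have e4 : ∫ z in (A x \ A y) ∪ (A y \ A x), μ z
        = (∫ z in A x \ A y, μ z) + ∫ z in A y \ A x, μ z :=
      setIntegral_union disjoint_sdiff_sdiff hmd2 hμint.integrableOn hμint.integrableOn
    have b4 : C * (∫ z in A x \ A y, μ z) + C * (∫ z in A y \ A x, μ z) ≤ C * gm := by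
      have h := mul_le_mul_of_nonneg_left (hgam_mem x hx y hy hdxy) hC0
      rw [e4, mul_add] at h
      exact h
    have hWl : W * l = l * W := mul_comm _ _
    have hCgm : C * gm = gm * C := mul_comm _ _
    show ((∫ z in A x, u (x + z) t' * μ z) - u x t') -
        ((∫ z in A y, u (y + z) t' * μ z) - u y t') ≤ l * W + gm * C - (u x t' - u y t')
    linarith
  have hcontP : ∀ p, ContinuousOn (vP p) (Ici (0:ℝ)) := by
    rintro ⟨⟨x, y⟩, hx, hy, hdxy⟩
    exact (hcO x (subset_closure hx)).sub (hcO y (subset_closure hy))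
  have hderivP : ∀ p (t' : ℝ), 0 < t' → HasDerivAt (vP p) (vP' p t') t' := by
    rintro ⟨⟨x, y⟩, hx, hy, hdxy⟩ t' ht'
    exact (hsol x hx t' ht').sub (hsol y hy t' ht')
  have hvPb' : ∀ p (t' : ℝ), 0 < t' → |vP' p t'| ≤ 4 * M := by
    rintro ⟨⟨x, y⟩, hx, hy, hdxy⟩ t' ht'
    have h1 := abs_le.1 (hIb x hx t' ht'.le)
    have h2 := abs_le.1 (hIb y hy t' ht'.le)
    have h3 := abs_le.1 (hub x (subset_closure hx) t' ht'.le)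
    have h4 := abs_le.1 (hub y (subset_closure hy) t' ht'.le)
    have he : vP' ⟨(x, y), hx, hy, hdxy⟩ t' =
        ((∫ z in A x, u (x + z) t' * μ z) - u x t') -
        ((∫ z in A y, u (y + z) t' * μ z) - u y t') := rfl
    rw [he, abs_le]; constructor <;> linarith
  have hequiP : ∀ t', 0 ≤ t' → ∀ ε, 0 < ε → ∃ δ > 0, ∀ s, 0 ≤ s → |s - t'| < δ →
      ∀ p, |vP p s - vP p t'| ≤ ε := by
    intro t' ht' ε hε
    obtain ⟨δ, hδ, hδ'⟩ := hUC t' ht' (ε/2) (by positivity)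
    refine ⟨δ, hδ, fun s hs hst => ?_⟩
    rintro ⟨⟨x, y⟩, hx, hy, hdxy⟩
    have h1 := abs_le.1 (hδ' s hs hst x (subset_closure hx))
    have h2 := abs_le.1 (hδ' s hs hst y (subset_closure hy))
    have he : vP ⟨(x, y), hx, hy, hdxy⟩ s - vP ⟨(x, y), hx, hy, hdxy⟩ t'
        = (u x s - u x t') - (u y s - u y t') := by
      show (u x s - u y s) - (u x t' - u y t') = _
      ring
    rw [he, abs_le]; constructor <;> linarith
  have hW0' : sSup (Set.range fun j => vP j 0) ≤ ω₀η := by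
    apply csSup_le (range_nonempty _)
    rintro r ⟨⟨⟨x, y⟩, hx, hy, hdxy⟩, rfl⟩
    dsimp only
    have he : vP ⟨(x, y), hx, hy, hdxy⟩ 0 = u₀ x - u₀ y := by
      show u x 0 - u y 0 = _
      rw [hu0 x (subset_closure hx), hu0 y (subset_closure hy)]
    rw [he]
    exact (abs_le.1 (hmod x hx y hy hdxy)).2
  have key : sSup (Set.range fun j => vP j t) ≤
      (ω₀η + gm * C * (Real.exp ((1 - l) * t) - 1) / (1 - l)) * Real.exp ((l - 1) * t) := by
    have h1l : (0:ℝ) < 1 - l := by linarith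
    have hE0 : (0:ℝ) < Real.exp ((l - 1) * t) := Real.exp_pos _
    have hE1 : Real.exp ((l - 1) * t) ≤ 1 := by
      rw [Real.exp_le_one_iff]; nlinarith [ht.le]
    have hEE : Real.exp ((1 - l) * t) * Real.exp ((l - 1) * t) = 1 := by
      rw [← Real.exp_add]
      have hz : (1 - l) * t + (l - 1) * t = 0 := by ring
      rw [hz, Real.exp_zero]
    set c := Real.exp ((l - 1) * t) + (1 - Real.exp ((l - 1) * t)) / (1 - l) with hcdef
    have hc0 : 0 < c := by
      have h2 : 0 ≤ (1 - Real.exp ((l - 1) * t)) / (1 - l) := div_nonneg (by linarith) h1l.le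
      rw [hcdef]; linarith
    clear_value c
    apply le_add_all_pos; intro ε hε
    obtain ⟨δ, hδ0, hδc⟩ : ∃ δ : ℝ, 0 < δ ∧ δ * c = ε :=
      ⟨ε / c, div_pos hε hc0, div_mul_cancel₀ ε hc0.ne'⟩
    obtain ⟨c1, hkey⟩ : ∃ c1 : ℝ, (1 - l) * c1 = gm * C + δ :=
      ⟨(gm * C + δ) / (1 - l), by rw [mul_comm, div_mul_cancel₀ _ h1l.ne']⟩
    have hgron := gronwall_sup vP vP' l (gm * C) (4 * M) hlam0 hcontP hderivP hvPb hvPb'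
      hequiP hslopeP
      (fun s => (ω₀η + δ - c1) * Real.exp ((l - 1) * s) + c1)
      (fun s => (ω₀η + δ - c1) * (Real.exp ((l - 1) * s) * ((l - 1) * 1)))
      (by
        simp only [mul_zero, Real.exp_zero, mul_one]
        linarith)
      (fun s => ((((hasDerivAt_id s).const_mul (l - 1)).exp).const_mul (ω₀η + δ - c1)).add_const c1)
      (by
        intro s hs
        have hq : (ω₀η + δ - c1) * (Real.exp ((l - 1) * s) * ((l - 1) * 1))
            = (l - 1) * ((ω₀η + δ - c1) * Real.exp ((l - 1) * s) + c1) + (gm * C + δ) := by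
          linear_combination hkey
        rw [hq]; linarith)
      t ht.le
    have halg : (ω₀η + δ - c1) * Real.exp ((l - 1) * t) + c1 =
        (ω₀η + gm * C * (Real.exp ((1 - l) * t) - 1) / (1 - l)) * Real.exp ((l - 1) * t)
        + δ * c := by
      rw [hcdef]
      have hne : (1:ℝ) - l ≠ 0 := h1l.ne'
      field_simp
      linear_combination (1 - Real.exp ((l - 1) * t)) * hkey - gm * C * hEE + Real.exp ((l - 1) * t) * gm * C * congrArg Real.exp (mul_comm (1 - l) t)
    linarith
  have hup : u x₀ t - u y₀ t ≤ sSup (Set.range fun j => vP j t) :=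
    hWle ⟨(x₀, y₀), hx₀, hy₀, hd₀⟩ t ht.le
  have hdn : u y₀ t - u x₀ t ≤ sSup (Set.range fun j => vP j t) :=
    hWle ⟨(y₀, x₀), hy₀, hx₀, by rwa [dist_comm]⟩ t ht.le
  have habs : |u x₀ t - u y₀ t| ≤ sSup (Set.range fun j => vP j t) :=
    abs_le.2 ⟨by linarith, hup⟩
  exact le_trans habs key
end

section
/- With the notation of the previous result, if λ(η) = 1, then for all t > 0, ω(η,t) ≤ ω₀(η) + γ(η)·‖u₀‖_∞·t. -/
open MeasureTheory Set Real

lemma duhamel_step (w h : ℝ → ℝ) (t P Q R : ℝ) (m : ℕ) (ht : 0 < t)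
    (hP : 0 ≤ P) (hR : 0 ≤ R)
    (hw : ContinuousOn w (Icc 0 t))
    (hd : ∀ s ∈ Ioc (0:ℝ) t, HasDerivAt w (h s - w s) s)
    (h0 : w 0 ≤ P)
    (hh : ∀ s ∈ Icc (0:ℝ) t, |h s| ≤ P + Q*(s+1) + R * s^m / m.factorial) :
    w t ≤ P + Q*t + R * t^(m+1) / (m+1).factorial := by
  have hfact : ((m+1).factorial : ℝ) = (m+1) * m.factorial := by
    rw [Nat.factorial_succ]; push_cast; ring
  set p : ℝ → ℝ := fun s => P + Q*s + R*s^(m+1)/(m+1).factorial with hp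
  set Ψ : ℝ → ℝ := fun s => Real.exp s * p s with hΨdef
  have hp' : ∀ s : ℝ, HasDerivAt p (Q + R*s^m/m.factorial) s := by
    intro s
    have h1 : HasDerivAt (fun s : ℝ => P + Q*s) (Q) s := by
      simpa using ((hasDerivAt_id s).const_mul Q).const_add P
    have h2 : HasDerivAt (fun s : ℝ => R*s^(m+1)/(m+1).factorial)
        (R*((m+1)*s^m)/(m+1).factorial) s := by
      exact ((hasDerivAt_pow (m+1) s).const_mul R).div_const _ |>.congr_deriv (by push_cast; ring)
    have := h1.add h2
    refine this.congr_deriv ?_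
    rw [hfact]
    have hm : (m.factorial : ℝ) ≠ 0 := Nat.cast_ne_zero.2 m.factorial_ne_zero
    field_simp
  have hΨ' : ∀ s : ℝ, HasDerivAt Ψ (Real.exp s * p s + Real.exp s * (Q + R*s^m/m.factorial)) s :=
    fun s => (Real.hasDerivAt_exp s).mul (hp' s)
  -- measurability / integrability of s ↦ exp s * h s on [0,t]
  have hwm : AEStronglyMeasurable w (volume.restrict (Ioc 0 t)) :=
    (hw.aestronglyMeasurable measurableSet_Icc).mono_measure
      (Measure.restrict_mono Ioc_subset_Icc_self le_rfl)
  have hgm : AEStronglyMeasurable (fun s => Real.exp s * (deriv w s + w s))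
      (volume.restrict (Ioc 0 t)) :=
    (Real.continuous_exp.aestronglyMeasurable.mono_measure Measure.restrict_le_self).mul
      (((measurable_deriv w).aestronglyMeasurable.mono_measure Measure.restrict_le_self).add hwm)
  have heq : ∀ s ∈ Ioc (0:ℝ) t, Real.exp s * h s = Real.exp s * (deriv w s + w s) := by
    intro s hs
    have := (hd s hs).deriv
    rw [this]; ring
  have hhm : AEStronglyMeasurable (fun s => Real.exp s * h s) (volume.restrict (Ioc 0 t)) := by
    refine hgm.congr ?_
    filter_upwards [(ae_restrict_iff' measurableSet_Ioc).2 (ae_of_all _ heq)] with s hs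
    exact hs.symm
  have hbd : ∀ s ∈ Icc (0:ℝ) t, |Real.exp s * h s| ≤
      Real.exp t * (P + |Q| * (t+1) + R * t^m / m.factorial) := by
    intro s hs
    rw [abs_mul, abs_exp]
    have h1 : |h s| ≤ P + |Q| * (s+1) + R * s^m / m.factorial := by
      refine (hh s hs).trans ?_
      have : Q * (s+1) ≤ |Q| * (s+1) :=
        mul_le_mul_of_nonneg_right (le_abs_self Q) (by linarith [hs.1])
      linarith
    have h2 : P + |Q| * (s+1) + R * s^m / m.factorial
        ≤ P + |Q| * (t+1) + R * t^m / m.factorial := by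
      have hs0 := hs.1; have hst := hs.2
      have e1 : |Q| * (s+1) ≤ |Q| * (t+1) :=
        mul_le_mul_of_nonneg_left (by linarith) (abs_nonneg Q)
      have e2 : R * s^m / m.factorial ≤ R * t^m / m.factorial := by gcongr
      linarith
    exact mul_le_mul (exp_le_exp.2 hs.2) (h1.trans h2) (abs_nonneg _) (exp_pos t).le
  have hint : IntervalIntegrable (fun s => Real.exp s * h s) volume 0 t := by
    rw [intervalIntegrable_iff_integrableOn_Ioc_of_le ht.le]
    refine Integrable.mono' (integrable_const (Real.exp t * (P + |Q| * (t+1) + R * t^m / m.factorial))) hhm ?_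
    filter_upwards [(ae_restrict_iff' measurableSet_Ioc).2
      (ae_of_all _ (fun s (hs : s ∈ Ioc (0:ℝ) t) => hbd s ⟨hs.1.le, hs.2⟩))] with s hs
    simpa only [Real.norm_eq_abs] using hs
  -- FTC for F = exp * w
  have hF : ∀ s ∈ Ioo (0:ℝ) t, HasDerivWithinAt (fun s => Real.exp s * w s)
      (Real.exp s * h s) (Ioi s) s := by
    intro s hs
    have := (Real.hasDerivAt_exp s).mul (hd s ⟨hs.1, hs.2.le⟩)
    have h2 : Real.exp s * w s + Real.exp s * (h s - w s) = Real.exp s * h s := by ring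
    rw [h2] at this
    exact this.hasDerivWithinAt
  have hFc : ContinuousOn (fun s => Real.exp s * w s) (Icc 0 t) :=
    (Real.continuous_exp.continuousOn).mul hw
  have hFTC : ∫ s in (0:ℝ)..t, Real.exp s * h s
      = Real.exp t * w t - Real.exp 0 * w 0 :=
    intervalIntegral.integral_eq_sub_of_hasDeriv_right_of_le ht.le hFc hF hint
  -- compare with Ψ'
  have hΨint : IntervalIntegrable
      (fun s => Real.exp s * p s + Real.exp s * (Q + R*s^m/m.factorial)) volume 0 t := by
    apply Continuous.intervalIntegrable
    fun_prop
  have hmono : ∫ s in (0:ℝ)..t, Real.exp s * h s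
      ≤ ∫ s in (0:ℝ)..t, (Real.exp s * p s + Real.exp s * (Q + R*s^m/m.factorial)) := by
    refine intervalIntegral.integral_mono_on ht.le hint hΨint ?_
    intro s hs
    have h1 : h s ≤ P + Q*(s+1) + R * s^m / m.factorial := (le_abs_self _).trans (hh s hs)
    calc Real.exp s * h s ≤ Real.exp s * (P + Q*(s+1) + R * s^m / m.factorial) := by
          exact mul_le_mul_of_nonneg_left h1 (exp_pos s).le
      _ ≤ Real.exp s * p s + Real.exp s * (Q + R*s^m/m.factorial) := by
          have hs0 : 0 ≤ s := hs.1
          have : 0 ≤ Real.exp s * (R*s^(m+1)/(m+1).factorial) := by positivity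
          nlinarith [exp_pos s, this]
  have hΨFTC : ∫ s in (0:ℝ)..t, (Real.exp s * p s + Real.exp s * (Q + R*s^m/m.factorial))
      = Ψ t - Ψ 0 :=
    intervalIntegral.integral_eq_sub_of_hasDerivAt (fun s _ => hΨ' s) hΨint
  have hΨ0 : Ψ 0 = P := by
    simp [hΨdef, hp, zero_pow (Nat.succ_ne_zero m)]
  have hfinal : Real.exp t * w t ≤ Ψ t := by
    have h5 := hFTC ▸ hmono
    rw [hΨFTC, hΨ0] at h5
    simp only [Real.exp_zero, one_mul] at h5
    linarith
  have hwt : w t ≤ p t := le_of_mul_le_mul_left hfinal (exp_pos t)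
  exact hwt

lemma setint_tools {n : ℕ} {μ : (Fin n → ℝ) → ℝ} (hμ0 : ∀ z, 0 ≤ μ z) (hμint : Integrable μ)
    (f : (Fin n → ℝ) → ℝ) (S : Set (Fin n → ℝ)) (hS : MeasurableSet S)
    (hfc : ContinuousOn f S) (K : ℝ) (hfK : ∀ z ∈ S, |f z| ≤ K) :
    IntegrableOn (fun z => f z * μ z) S ∧ |∫ z in S, f z * μ z| ≤ K * ∫ z in S, μ z := by
  have hm : AEStronglyMeasurable (fun z => f z * μ z) (volume.restrict S) :=
    (hfc.aestronglyMeasurable hS).mul hμint.aestronglyMeasurable.restrict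
  have hKint : IntegrableOn (fun z => K * μ z) S := (hμint.const_mul K).integrableOn
  have habs : ∀ z ∈ S, |f z * μ z| ≤ K * μ z := by
    intro z hz
    rw [abs_mul, abs_of_nonneg (hμ0 z)]
    exact mul_le_mul_of_nonneg_right (hfK z hz) (hμ0 z)
  have hint : IntegrableOn (fun z => f z * μ z) S := by
    refine hKint.mono' hm ?_
    filter_upwards [(ae_restrict_iff' hS).2 (ae_of_all _ habs)] with z hz
    simpa [Real.norm_eq_abs, abs_mul] using hz
  refine ⟨hint, ?_⟩
  calc |∫ z in S, f z * μ z| ≤ ∫ z in S, |f z * μ z| :=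
        by
        simpa [Real.norm_eq_abs, abs_mul] using norm_integral_le_integral_norm (μ := volume.restrict S) (fun z => f z * μ z)
    _ ≤ ∫ z in S, K * μ z := by
        refine setIntegral_mono_on ?_ hKint hS ?_
        · simpa [abs_mul, IntegrableOn] using hint.abs
        · intro z hz
          simpa [abs_mul] using habs z hz
    _ = K * ∫ z in S, μ z := integral_const_mul K μ

lemma setint_mu {n : ℕ} {μ : (Fin n → ℝ) → ℝ} (hμ0 : ∀ z, 0 ≤ μ z) (hμint : Integrable μ)
    (hμ1 : ∫ z, μ z = 1) (S : Set (Fin n → ℝ)) :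
    0 ≤ ∫ z in S, μ z ∧ ∫ z in S, μ z ≤ 1 :=
  ⟨setIntegral_nonneg_of_ae_restrict (ae_of_all _ (fun z => hμ0 z)),
   (setIntegral_le_integral hμint (ae_of_all _ hμ0)).trans hμ1.le⟩
lemma duhamel_abs (w h : ℝ → ℝ) (t P Q R : ℝ) (m : ℕ) (ht : 0 < t)
    (hP : 0 ≤ P) (hR : 0 ≤ R)
    (hw : ContinuousOn w (Icc 0 t))
    (hd : ∀ s ∈ Ioc (0:ℝ) t, HasDerivAt w (h s - w s) s)
    (h0 : |w 0| ≤ P)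
    (hh : ∀ s ∈ Icc (0:ℝ) t, |h s| ≤ P + Q*(s+1) + R * s^m / m.factorial) :
    |w t| ≤ P + Q*t + R * t^(m+1) / (m+1).factorial := by
  rw [abs_le]
  constructor
  · have := duhamel_step (fun s => -w s) (fun s => -h s) t P Q R m ht hP hR hw.neg
      (fun s hs => by
        have h2 := (hd s hs).neg
        refine h2.congr_deriv ?_
        ring)
      (by simpa using (neg_le_abs (w 0)).trans h0)
      (fun s hs => by simpa [abs_neg] using hh s hs)
    linarith [this]
  · exact duhamel_step w h t P Q R m ht hP hR hw hd ((le_abs_self _).trans h0) hh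

/-- modulus of continuity bound in a bounded domain when `λ(η) = 1`:
`ω(η,t) ≤ ω₀(η) + γ(η)‖u₀‖_∞ t`. -/
theorem modulus_bound_lam_eq_one (n : ℕ) (μ : (Fin n → ℝ) → ℝ) (Ω : Set (Fin n → ℝ))
    (hμ0 : ∀ z, 0 ≤ μ z) (hμint : Integrable μ) (hμ1 : ∫ z, μ z = 1)
    (hΩo : IsOpen Ω) (hΩb : Bornology.IsBounded Ω)
    (u : (Fin n → ℝ) → ℝ → ℝ) (u₀ : (Fin n → ℝ) → ℝ)
    (huc : ContinuousOn (fun p : (Fin n → ℝ) × ℝ => u p.1 p.2) (closure Ω ×ˢ Set.Ici (0:ℝ)))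
    (M : ℝ) (hub : ∀ x ∈ closure Ω, ∀ t ≥ (0:ℝ), |u x t| ≤ M)
    (hu0 : ∀ x ∈ closure Ω, u x 0 = u₀ x)
    (hu₀c : ContinuousOn u₀ (closure Ω)) (hu₀0 : ∀ x ∈ frontier Ω, u₀ x = 0)
    (hsol : ∀ x ∈ Ω, ∀ t > (0:ℝ),
      HasDerivAt (fun s => u x s)
        ((∫ z in {z | x + z ∈ Ω}, u (x + z) t * μ z) - u x t) t)
    (C : ℝ) (hC : ∀ x ∈ closure Ω, |u₀ x| ≤ C)
    (η : ℝ) (hη : 0 < η) (ω₀η : ℝ)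
    (hmod : ∀ x ∈ Ω, ∀ y ∈ Ω, dist x y < η → |u₀ x - u₀ y| ≤ ω₀η)
    (hlam : lamQ n μ Ω η = 1) :
    ∀ t > (0:ℝ), ∀ x ∈ Ω, ∀ y ∈ Ω, dist x y < η →
      |u x t - u y t| ≤ ω₀η + gamQ n μ Ω η * C * t := by
  intro t ht x hx y hy hxy
  have hC0 : 0 ≤ C := (abs_nonneg _).trans (hC x (subset_closure hx))
  have hM0 : 0 ≤ M := (abs_nonneg _).trans (hub x (subset_closure hx) 0 le_rfl)
  have hω0 : 0 ≤ ω₀η := by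
    have := hmod x hx x hx (by simpa [dist_self] using hη)
    simpa using this
  set G := gamQ n μ Ω η with hGdef
  have hbdd : BddAbove {r | ∃ a ∈ Ω, ∃ b ∈ Ω, dist a b < η ∧
      r = ∫ z in ({z | a + z ∈ Ω} \ {z | b + z ∈ Ω}) ∪ ({z | b + z ∈ Ω} \ {z | a + z ∈ Ω}), μ z} := by
    refine ⟨1, ?_⟩
    rintro r ⟨a, ha, b, hb, hd, rfl⟩
    exact (setIntegral_le_integral hμint (ae_of_all _ hμ0)).trans hμ1.le
  have hG0 : 0 ≤ G := by
    refine le_csSup hbdd ⟨x, hx, x, hx, by simpa [dist_self] using hη, ?_⟩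
    simp
  have hGpair : ∀ a ∈ Ω, ∀ b ∈ Ω, dist a b < η →
      (∫ z in ({z | a + z ∈ Ω} \ {z | b + z ∈ Ω}) ∪ ({z | b + z ∈ Ω} \ {z | a + z ∈ Ω}), μ z) ≤ G :=
    fun a ha b hb hd => le_csSup hbdd ⟨a, ha, b, hb, hd, rfl⟩
  have hAmeas : ∀ a : Fin n → ℝ, MeasurableSet {z | a + z ∈ Ω} :=
    fun a => (hΩo.preimage (continuous_const.add continuous_id)).measurableSet
  have hspace : ∀ s : ℝ, 0 ≤ s → ContinuousOn (fun a => u a s) (closure Ω) := by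
    intro s hs
    have h1 : ContinuousOn ((fun p : (Fin n → ℝ) × ℝ => u p.1 p.2) ∘ (fun a => (a, s)))
        (closure Ω) :=
      huc.comp (continuous_id.prodMk continuous_const).continuousOn (fun a ha => ⟨ha, hs⟩)
    exact h1
  have hzcont : ∀ a : Fin n → ℝ, ∀ s : ℝ, 0 ≤ s →
      ContinuousOn (fun z => u (a + z) s) {z | a + z ∈ Ω} := by
    intro a s hs
    exact (hspace s hs).comp (continuous_const.add continuous_id).continuousOn
      (fun z hz => subset_closure hz)
  have htime : ∀ a ∈ closure Ω, ∀ T : ℝ, ContinuousOn (fun s => u a s) (Icc 0 T) := by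
    intro a ha T
    have h1 : ContinuousOn ((fun p : (Fin n → ℝ) × ℝ => u p.1 p.2) ∘ (fun s : ℝ => (a, s)))
        (Icc 0 T) :=
      huc.comp (continuous_const.prodMk continuous_id).continuousOn (fun s hs => ⟨ha, hs.1⟩)
    exact h1
  -- maximum principle, with error term
  have maxkey : ∀ m : ℕ, ∀ a ∈ Ω, ∀ s : ℝ, 0 ≤ s →
      |u a s| ≤ C + 2*M * s^m / m.factorial := by
    intro m
    induction m with
    | zero =>
      intro a ha s hs
      have h1 := hub a (subset_closure ha) s hs
      simp only [pow_zero, Nat.factorial_zero, Nat.cast_one]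
      linarith
    | succ m ih =>
      intro a ha s hs
      rcases hs.lt_or_eq with h | h
      · have hd : ∀ r ∈ Ioc (0:ℝ) s, HasDerivAt (fun r => u a r)
            ((∫ z in {z | a + z ∈ Ω}, u (a + z) r * μ z) - u a r) r :=
          fun r hr => hsol a ha r hr.1
        have hh : ∀ r ∈ Icc (0:ℝ) s,
            |∫ z in {z | a + z ∈ Ω}, u (a + z) r * μ z|
              ≤ C + 0*(r+1) + (2*M) * r^m / m.factorial := by
          intro r hr
          have hK0 : 0 ≤ C + 2*M * r^m / m.factorial := by
            have : (0:ℝ) ≤ 2*M * r^m / m.factorial :=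
              div_nonneg (mul_nonneg (by linarith) (pow_nonneg hr.1 m)) (Nat.cast_nonneg _)
            linarith
          have hb := (setint_tools hμ0 hμint (fun z => u (a + z) r) _ (hAmeas a)
            (hzcont a r hr.1) (C + 2*M * r^m / m.factorial)
            (fun z hz => ih (a + z) hz r hr.1)).2
          have hmu := setint_mu hμ0 hμint hμ1 {z | a + z ∈ Ω}
          have h2 : (C + 2*M * r^m / m.factorial) * (∫ z in {z | a + z ∈ Ω}, μ z)
              ≤ C + 2*M * r^m / m.factorial := mul_le_of_le_one_right hK0 hmu.2
          linarith [hb.trans h2]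
        have hfin := duhamel_abs (fun r => u a r)
          (fun r => ∫ z in {z | a + z ∈ Ω}, u (a + z) r * μ z)
          s C 0 (2*M) m h hC0 (by linarith)
          (htime a (subset_closure ha) s) hd
          (by show |u a 0| ≤ C
              rw [hu0 a (subset_closure ha)]; exact hC a (subset_closure ha)) hh
        linarith [hfin]
      · rw [← h, hu0 a (subset_closure ha)]
        have h1 := hC a (subset_closure ha)
        simp only [zero_pow (Nat.succ_ne_zero m), mul_zero, zero_div, add_zero]
        exact h1
  have maxp : ∀ a ∈ Ω, ∀ s : ℝ, 0 ≤ s → |u a s| ≤ C := by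
    intro a ha s hs
    have hT : Filter.Tendsto (fun m : ℕ => C + 2*M * s^m / m.factorial)
        Filter.atTop (nhds C) := by
      have h1 := (FloorSemiring.tendsto_pow_div_factorial_atTop s).const_mul (2*M)
      have h2 := h1.const_add C
      simpa [mul_div_assoc] using h2
    exact ge_of_tendsto' hT (fun m => maxkey m a ha s hs)
  -- modulus bound with error term
  have pairkey : ∀ m : ℕ, ∀ a ∈ Ω, ∀ b ∈ Ω, dist a b < η → ∀ s : ℝ, 0 ≤ s →
      |u a s - u b s| ≤ ω₀η + G*C*s + 2*M * s^m / m.factorial := by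
    intro m
    induction m with
    | zero =>
      intro a ha b hb hab s hs
      have h1 := hub a (subset_closure ha) s hs
      have h2 := hub b (subset_closure hb) s hs
      have h3 : 0 ≤ G*C*s := mul_nonneg (mul_nonneg hG0 hC0) hs
      have h4 : |u a s - u b s| ≤ |u a s| + |u b s| := by
        simpa [Real.norm_eq_abs] using norm_sub_le (u a s) (u b s)
      simp only [pow_zero, Nat.factorial_zero, Nat.cast_one]
      linarith
    | succ m ih =>
      intro a ha b hb hab s hs
      rcases hs.lt_or_eq with h | h
      · have hd : ∀ r ∈ Ioc (0:ℝ) s, HasDerivAt (fun r => u a r - u b r)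
            (((∫ z in {z | a + z ∈ Ω}, u (a + z) r * μ z)
              - (∫ z in {z | b + z ∈ Ω}, u (b + z) r * μ z)) - (u a r - u b r)) r := by
          intro r hr
          have h2 := (hsol a ha r hr.1).sub (hsol b hb r hr.1)
          refine h2.congr_deriv ?_
          ring
        have hh : ∀ r ∈ Icc (0:ℝ) s,
            |(∫ z in {z | a + z ∈ Ω}, u (a + z) r * μ z)
              - (∫ z in {z | b + z ∈ Ω}, u (b + z) r * μ z)|
              ≤ ω₀η + (G*C)*(r+1) + 2*M * r^m / m.factorial := by
          intro r hr
          have hcontA : ContinuousOn (fun z => u (a + z) r) {z | a + z ∈ Ω} := hzcont a r hr.1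
          have hcontB : ContinuousOn (fun z => u (b + z) r) {z | b + z ∈ Ω} := hzcont b r hr.1
          have hψ0 : 0 ≤ ω₀η + G*C*r + 2*M * r^m / m.factorial := by
            have e1 : 0 ≤ G*C*r := mul_nonneg (mul_nonneg hG0 hC0) hr.1
            have e2 : (0:ℝ) ≤ 2*M * r^m / m.factorial :=
              div_nonneg (mul_nonneg (by linarith) (pow_nonneg hr.1 m)) (Nat.cast_nonneg _)
            linarith
          have iAB := setint_tools hμ0 hμint (fun z => u (a + z) r)
            ({z | a + z ∈ Ω} ∩ {z | b + z ∈ Ω}) ((hAmeas a).inter (hAmeas b))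
            (hcontA.mono inter_subset_left) M
            (fun z hz => hub (a + z) (subset_closure hz.1) r hr.1)
          have iABb := setint_tools hμ0 hμint (fun z => u (b + z) r)
            ({z | a + z ∈ Ω} ∩ {z | b + z ∈ Ω}) ((hAmeas a).inter (hAmeas b))
            (hcontB.mono inter_subset_right) M
            (fun z hz => hub (b + z) (subset_closure hz.2) r hr.1)
          have iBA := setint_tools hμ0 hμint (fun z => u (b + z) r)
            ({z | b + z ∈ Ω} ∩ {z | a + z ∈ Ω}) ((hAmeas b).inter (hAmeas a))
            (hcontB.mono inter_subset_left) M
            (fun z hz => hub (b + z) (subset_closure hz.1) r hr.1)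
          have iAdB := setint_tools hμ0 hμint (fun z => u (a + z) r)
            ({z | a + z ∈ Ω} \ {z | b + z ∈ Ω}) ((hAmeas a).diff (hAmeas b))
            (hcontA.mono diff_subset) C
            (fun z hz => maxp (a + z) hz.1 r hr.1)
          have iBdA := setint_tools hμ0 hμint (fun z => u (b + z) r)
            ({z | b + z ∈ Ω} \ {z | a + z ∈ Ω}) ((hAmeas b).diff (hAmeas a))
            (hcontB.mono diff_subset) C
            (fun z hz => maxp (b + z) hz.1 r hr.1)
          have hsplitA : (∫ z in {z | a + z ∈ Ω}, u (a + z) r * μ z)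
              = (∫ z in {z | a + z ∈ Ω} ∩ {z | b + z ∈ Ω}, u (a + z) r * μ z)
                + ∫ z in {z | a + z ∈ Ω} \ {z | b + z ∈ Ω}, u (a + z) r * μ z := by
            rw [← setIntegral_union (disjoint_sdiff_self_right.mono_left inter_subset_right)
              ((hAmeas a).diff (hAmeas b)) iAB.1 iAdB.1, Set.inter_union_diff]
          have hsplitB : (∫ z in {z | b + z ∈ Ω}, u (b + z) r * μ z)
              = (∫ z in {z | a + z ∈ Ω} ∩ {z | b + z ∈ Ω}, u (b + z) r * μ z)
                + ∫ z in {z | b + z ∈ Ω} \ {z | a + z ∈ Ω}, u (b + z) r * μ z := by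
            rw [Set.inter_comm,
              ← setIntegral_union (disjoint_sdiff_self_right.mono_left inter_subset_right)
                ((hAmeas b).diff (hAmeas a)) iBA.1 iBdA.1, Set.inter_union_diff]
          have idiff := setint_tools hμ0 hμint (fun z => u (a + z) r - u (b + z) r)
            ({z | a + z ∈ Ω} ∩ {z | b + z ∈ Ω}) ((hAmeas a).inter (hAmeas b))
            ((hcontA.mono inter_subset_left).sub (hcontB.mono inter_subset_right))
            (ω₀η + G*C*r + 2*M * r^m / m.factorial)
            (fun z hz => by
              have hdz : dist (a + z) (b + z) = dist a b := by
                rw [dist_eq_norm, dist_eq_norm]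
                congr 1
                abel
              exact ih (a + z) hz.1 (b + z) hz.2 (by rw [hdz]; exact hab) r hr.1)
          have hdiffeq : (∫ z in {z | a + z ∈ Ω} ∩ {z | b + z ∈ Ω}, u (a + z) r * μ z)
              - (∫ z in {z | a + z ∈ Ω} ∩ {z | b + z ∈ Ω}, u (b + z) r * μ z)
              = ∫ z in {z | a + z ∈ Ω} ∩ {z | b + z ∈ Ω},
                  (u (a + z) r - u (b + z) r) * μ z := by
            rw [← integral_sub iAB.1 iABb.1]
            congr 1
            ext z
            ring
          have hsd : (∫ z in {z | a + z ∈ Ω} \ {z | b + z ∈ Ω}, μ z)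
              + (∫ z in {z | b + z ∈ Ω} \ {z | a + z ∈ Ω}, μ z) ≤ G := by
            rw [← setIntegral_union disjoint_sdiff_sdiff ((hAmeas b).diff (hAmeas a))
              hμint.integrableOn hμint.integrableOn]
            exact hGpair a ha b hb hab
          have hmuAB := setint_mu hμ0 hμint hμ1 ({z | a + z ∈ Ω} ∩ {z | b + z ∈ Ω})
          have t1 : |(∫ z in {z | a + z ∈ Ω} ∩ {z | b + z ∈ Ω}, u (a + z) r * μ z)
              - (∫ z in {z | a + z ∈ Ω} ∩ {z | b + z ∈ Ω}, u (b + z) r * μ z)|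
              ≤ ω₀η + G*C*r + 2*M * r^m / m.factorial := by
            rw [hdiffeq]
            exact idiff.2.trans (mul_le_of_le_one_right hψ0 hmuAB.2)
          have t4 := mul_le_mul_of_nonneg_left hsd hC0
          rw [mul_add] at t4
          rw [hsplitA, hsplitB]
          have tri : ∀ X Y Z W : ℝ, |(X + Y) - (Z + W)| ≤ |X - Z| + |Y| + |W| := by
            intro X Y Z W
            have e1 : (X + Y) - (Z + W) = (X - Z) + Y - W := by ring
            rw [e1]
            have e2 := abs_add_le (X - Z) Y
            have e3 : |(X - Z) + Y - W| ≤ |(X - Z) + Y| + |W| := by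
              simpa [Real.norm_eq_abs] using norm_sub_le ((X - Z) + Y) W
            linarith
          have := tri (∫ z in {z | a + z ∈ Ω} ∩ {z | b + z ∈ Ω}, u (a + z) r * μ z)
            (∫ z in {z | a + z ∈ Ω} \ {z | b + z ∈ Ω}, u (a + z) r * μ z)
            (∫ z in {z | a + z ∈ Ω} ∩ {z | b + z ∈ Ω}, u (b + z) r * μ z)
            (∫ z in {z | b + z ∈ Ω} \ {z | a + z ∈ Ω}, u (b + z) r * μ z)
          linarith [this, t1, iAdB.2, iBdA.2]
        have hfin := duhamel_abs (fun r => u a r - u b r)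
          (fun r => (∫ z in {z | a + z ∈ Ω}, u (a + z) r * μ z)
            - (∫ z in {z | b + z ∈ Ω}, u (b + z) r * μ z))
          s ω₀η (G*C) (2*M) m h hω0 (by linarith)
          ((htime a (subset_closure ha) s).sub (htime b (subset_closure hb) s)) hd
          (by show |u a 0 - u b 0| ≤ ω₀η
              rw [hu0 a (subset_closure ha), hu0 b (subset_closure hb)]
              exact hmod a ha b hb hab) hh
        linarith [hfin]
      · rw [← h, hu0 a (subset_closure ha), hu0 b (subset_closure hb)]
        have h1 := hmod a ha b hb hab
        simp only [zero_pow (Nat.succ_ne_zero m), mul_zero, zero_div, add_zero]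
        exact h1
  have hT : Filter.Tendsto (fun m : ℕ => ω₀η + G*C*t + 2*M * t^m / m.factorial)
      Filter.atTop (nhds (ω₀η + G*C*t)) := by
    have h1 := (FloorSemiring.tendsto_pow_div_factorial_atTop t).const_mul (2*M)
    have h2 := h1.const_add (ω₀η + G*C*t)
    simpa [mul_div_assoc, add_assoc] using h2
  have hfinal := ge_of_tendsto' hT (fun m => pairkey m x hx y hy hxy t ht.le)
  linarith [hfinal]
end

section
/- Monotone preservation of positivity: let μ be a nonnegative finite measure on ℝⁿ and let v : ℝⁿ × [0,∞) → ℝ be bounded, continuous in time, and satisfy ∂_t v(x,t) = ∫_{ℝⁿ} v(x+z,t) dμ(z). If v(·,0) ≥ 0 and v(x₀,t₀) > 0 at some point, then v(x₀,t) > 0 for all t ≥ t₀; more generally, v(x,·) is nondecreasing in t whenever v ≥ 0 everywhere. -/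
open MeasureTheory Set Real Filter

theorem aux_nonneg (n : ℕ) (μ : Measure (Fin n → ℝ)) [IsFiniteMeasure μ]
    (v : (Fin n → ℝ) → ℝ → ℝ)
    (hmeas : Measurable (fun p : (Fin n → ℝ) × ℝ => v p.1 p.2))
    (hbdd : ∀ T > (0:ℝ), ∃ C, ∀ x, ∀ t ∈ Set.Icc (0:ℝ) T, |v x t| ≤ C)
    (hsol : ∀ x, ∀ t ≥ (0:ℝ), HasDerivAt (fun s => v x s) (∫ z, v (x + z) t ∂μ) t)
    (h0 : ∀ x, 0 ≤ v x 0) :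
    ∀ x, ∀ t ≥ (0:ℝ), 0 ≤ v x t := by
  intro x t ht
  rcases eq_or_lt_of_le ht with h | h
  · exact h ▸ h0 x
  obtain ⟨C, hC⟩ := hbdd t h
  set M := (μ Set.univ).toReal with hM
  have hM0 : 0 ≤ M := ENNReal.toReal_nonneg
  -- measurability of sections in z
  have hsec : ∀ (y : Fin n → ℝ) (s : ℝ), Measurable fun z => v (y + z) s := by
    intro y s
    exact hmeas.comp ((measurable_const.add measurable_id).prodMk measurable_const)
  -- integrability in z
  have hint : ∀ (y : Fin n → ℝ), ∀ s ∈ Set.Icc (0:ℝ) t, Integrable (fun z => v (y + z) s) μ := by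
    intro y s hs
    refine Integrable.mono' (integrable_const C) (hsec y s).aestronglyMeasurable ?_
    filter_upwards with z
    simpa using hC (y + z) s hs
  -- measurability of F y  in s
  have hFmeas : ∀ (y : Fin n → ℝ), Measurable fun s : ℝ => ∫ z, v (y + z) s ∂μ := by
    intro y
    have h1 : StronglyMeasurable (Function.uncurry fun (s : ℝ) (z : Fin n → ℝ) => v (y + z) s) := by
      have : Measurable fun q : ℝ × (Fin n → ℝ) => v (y + q.2) q.1 :=
        hmeas.comp ((measurable_const.add measurable_snd).prodMk measurable_fst)
      exact this.stronglyMeasurable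
    exact h1.integral_prod_right.measurable
  -- interval integrability of F y on [0,u] for u ∈ [0,t]
  have hFint : ∀ (y : Fin n → ℝ), ∀ u ∈ Set.Icc (0:ℝ) t,
      IntervalIntegrable (fun s => ∫ z, v (y + z) s ∂μ) volume 0 u := by
    intro y u hu
    rw [intervalIntegrable_iff_integrableOn_Ioc_of_le hu.1]
    refine Integrable.mono' (g := fun _ => C * M)
      (integrableOn_const measure_Ioc_lt_top.ne)
      (hFmeas y).aestronglyMeasurable ?_
    refine (ae_restrict_iff' measurableSet_Ioc).mpr ?_
    filter_upwards with s hs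
    have hs' : s ∈ Set.Icc (0:ℝ) t := ⟨hs.1.le, hs.2.trans hu.2⟩
    rw [hM]
    refine norm_integral_le_of_norm_le_const ?_
    filter_upwards with z
    simpa using hC (y + z) s hs'
  -- FTC
  have hFTC : ∀ (y : Fin n → ℝ), ∀ u ∈ Set.Icc (0:ℝ) t,
      v y u = v y 0 + ∫ s in (0:ℝ)..u, ∫ z, v (y + z) s ∂μ := by
    intro y u hu
    have := intervalIntegral.integral_eq_sub_of_hasDerivAt
      (f := fun s => v y s) (f' := fun s => ∫ z, v (y + z) s ∂μ)
      (fun s hs => by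
        rw [Set.uIcc_of_le hu.1] at hs
        exact hsol y s hs.1) (hFint y u hu)
    linarith [this]
  have hC0 : 0 ≤ C := le_trans (abs_nonneg _) (hC x 0 ⟨le_refl _, h.le⟩)
  -- key induction
  have key : ∀ k : ℕ, ∀ (y : Fin n → ℝ), ∀ u ∈ Set.Icc (0:ℝ) t,
      -v y u ≤ C * (M * u) ^ k / k.factorial := by
    intro k
    induction k with
    | zero =>
      intro y u hu
      simp only [pow_zero, Nat.factorial_zero, Nat.cast_one, mul_one, div_one]
      have := hC y u hu
      have := abs_le.mp this
      linarith [this.1]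
    | succ k ih =>
      intro y u hu
      have step1 : -v y u ≤ ∫ s in (0:ℝ)..u, -(∫ z, v (y + z) s ∂μ) := by
        rw [intervalIntegral.integral_neg]
        have := hFTC y u hu
        have h0' := h0 y
        linarith
      have step2 : ∫ s in (0:ℝ)..u, -(∫ z, v (y + z) s ∂μ)
          ≤ ∫ s in (0:ℝ)..u, M * (C * (M * s) ^ k / k.factorial) := by
        refine intervalIntegral.integral_mono_on hu.1 (hFint y u hu).neg ?_ ?_
        · apply Continuous.intervalIntegrable
          fun_prop
        · intro s hs
          have hs' : s ∈ Set.Icc (0:ℝ) t := ⟨hs.1, hs.2.trans hu.2⟩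
          have hb : ∫ z, -(v (y + z) s) ∂μ ≤ ∫ _z, C * (M * s) ^ k / k.factorial ∂μ := by
            refine integral_mono (hint y s hs').neg (integrable_const _) ?_
            intro z
            have := ih (y + z) s hs'
            simpa using this
          rw [integral_neg, integral_const, smul_eq_mul] at hb
          linarith [hb, show μ.real Set.univ * (C * (M * s) ^ k / k.factorial) = M * (C * (M * s) ^ k / k.factorial) from rfl]
      have step3 : ∫ s in (0:ℝ)..u, M * (C * (M * s) ^ k / k.factorial)
          = C * (M * u) ^ (k + 1) / (k + 1).factorial := by
        have : ∀ s : ℝ, M * (C * (M * s) ^ k / k.factorial)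
            = (C * M ^ (k + 1) / k.factorial) * s ^ k := by
          intro s; rw [mul_pow]; ring
        simp_rw [this]
        rw [intervalIntegral.integral_const_mul, integral_pow]
        rw [Nat.factorial_succ]
        push_cast
        have hk : (k.factorial : ℝ) ≠ 0 := by positivity
        field_simp
        ring
      rw [step3] at step2
      linarith
  -- pass to the limit
  have hlim : Filter.Tendsto (fun k : ℕ => C * (M * t) ^ k / k.factorial) atTop (nhds 0) := by
    have := (FloorSemiring.tendsto_pow_div_factorial_atTop (M * t)).const_mul C
    simpa [mul_div_assoc] using this
  have : -v x t ≤ 0 :=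
    ge_of_tendsto' hlim (fun k => key k x t ⟨ht, le_refl t⟩)
  linarith

theorem aux_mono (n : ℕ) (μ : Measure (Fin n → ℝ)) [IsFiniteMeasure μ]
    (v : (Fin n → ℝ) → ℝ → ℝ)
    (hsol : ∀ x, ∀ t ≥ (0:ℝ), HasDerivAt (fun s => v x s) (∫ z, v (x + z) t ∂μ) t)
    (hpos : ∀ x, ∀ t ≥ (0:ℝ), 0 ≤ v x t) :
    ∀ x, MonotoneOn (fun t => v x t) (Set.Ici (0:ℝ)) := by
  intro x
  refine monotoneOn_of_deriv_nonneg (convex_Ici 0) ?_ ?_ ?_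
  · intro s hs
    exact (hsol x s hs).continuousAt.continuousWithinAt
  · intro s hs
    rw [interior_Ici] at hs
    exact ((hsol x s hs.le).differentiableAt).differentiableWithinAt
  · intro s hs
    rw [interior_Ici] at hs
    rw [(hsol x s hs.le).deriv]
    exact integral_nonneg fun z => hpos (x + z) s hs.le

/-- monotone preservation of positivity for `∂_t v(x,t) = ∫ v(x+z,t) dμ(z)`
with `μ` a nonnegative finite measure: if `v(·,0) ≥ 0` and `v(x₀,t₀) > 0`, then
`v(x₀,t) > 0` for all `t ≥ t₀`; moreover, if `v ≥ 0` everywhere then `v(x,·)` is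
nondecreasing in `t` on `[0,∞)`. -/
theorem positivity_monotone (n : ℕ) (μ : Measure (Fin n → ℝ)) [IsFiniteMeasure μ]
    (v : (Fin n → ℝ) → ℝ → ℝ)
    (hmeas : Measurable (fun p : (Fin n → ℝ) × ℝ => v p.1 p.2))
    (hbdd : ∀ T > (0:ℝ), ∃ C, ∀ x, ∀ t ∈ Set.Icc (0:ℝ) T, |v x t| ≤ C)
    (hsol : ∀ x, ∀ t ≥ (0:ℝ), HasDerivAt (fun s => v x s) (∫ z, v (x + z) t ∂μ) t)
    (h0 : ∀ x, 0 ≤ v x 0) :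
    (∀ x₀, ∀ t₀ ≥ (0:ℝ), 0 < v x₀ t₀ → ∀ t ≥ t₀, 0 < v x₀ t) ∧
    ((∀ x, ∀ t ≥ (0:ℝ), 0 ≤ v x t) → ∀ x, MonotoneOn (fun t => v x t) (Set.Ici (0:ℝ))) := by
  have hnn := aux_nonneg n μ v hmeas hbdd hsol h0
  constructor
  · intro x₀ t₀ ht₀ hv t ht
    have hmono := aux_mono n μ v hsol hnn x₀
    have := hmono (Set.mem_Ici.mpr ht₀) (Set.mem_Ici.mpr (ht₀.trans ht)) ht
    exact lt_of_lt_of_le hv this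
  · intro hpos x
    exact aux_mono n μ v hsol hpos x
end

section
/- Preservation of the L∞ bound: let μ be a nonnegative L¹ function of total mass 1, Ω open bounded, and u a bounded continuous solution of the homogeneous Dirichlet problem ∂_t u = K₀(u) with initial data u₀. Then for every t ≥ 0, ‖u(·,t)‖_{L∞(Ω)} ≤ ‖u₀‖_{L∞(Ω)}. -/
open MeasureTheory Set Real Filter

/-- preservation of the `L∞` bound: for a bounded continuous solution `u` of
the homogeneous Dirichlet problem `∂_t u = K₀(u)` with `u(·,0) = u₀`, one has
`‖u(·,t)‖_{L∞(Ω)} ≤ ‖u₀‖_{L∞(Ω)}` for every `t ≥ 0`. -/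
theorem linfty_bound_preserved (n : ℕ) (μ : (Fin n → ℝ) → ℝ) (Ω : Set (Fin n → ℝ))
    (hμ0 : ∀ z, 0 ≤ μ z) (hμint : Integrable μ) (hμ1 : ∫ z, μ z = 1)
    (hΩo : IsOpen Ω) (hΩb : Bornology.IsBounded Ω)
    (u : (Fin n → ℝ) → ℝ → ℝ) (u₀ : (Fin n → ℝ) → ℝ)
    (huc : ContinuousOn (fun p : (Fin n → ℝ) × ℝ => u p.1 p.2) (closure Ω ×ˢ Set.Ici (0:ℝ)))
    (M : ℝ) (hub : ∀ x ∈ closure Ω, ∀ t ≥ (0:ℝ), |u x t| ≤ M)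
    (hu0 : ∀ x ∈ closure Ω, u x 0 = u₀ x)
    (hsol : ∀ x ∈ Ω, ∀ t > (0:ℝ),
      HasDerivAt (fun s => u x s)
        ((∫ z in {z | x + z ∈ Ω}, u (x + z) t * μ z) - u x t) t)
    (C : ℝ) (hC : ∀ x ∈ Ω, |u₀ x| ≤ C) :
    ∀ t ≥ (0:ℝ), ∀ x ∈ Ω, |u x t| ≤ C := by
  intro t ht x hx
  have hne : Ω.Nonempty := ⟨x, hx⟩
  set K := closure Ω with hKdef
  have hKc : IsCompact K := hΩb.isCompact_closure
  have hKne : K.Nonempty := hne.closure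
  have hsub : Ω ⊆ K := subset_closure
  have hC0 : 0 ≤ C := (abs_nonneg _).trans (hC x hx)
  -- the sup function
  set N : ℝ → ℝ := fun s => sSup ((fun y => |u y (max s 0)|) '' K) with hNdef
  have hBdd : ∀ s : ℝ, BddAbove ((fun y => |u y (max s 0)|) '' K) := by
    intro s
    refine ⟨M, ?_⟩
    rintro _ ⟨y, hy, rfl⟩
    exact hub y hy _ (le_max_right _ _)
  have hleN : ∀ s : ℝ, ∀ y ∈ K, |u y (max s 0)| ≤ N s := fun s y hy =>
    le_csSup (hBdd s) (mem_image_of_mem _ hy)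
  have hleN' : ∀ s ≥ (0:ℝ), ∀ y ∈ K, |u y s| ≤ N s := by
    intro s hs y hy
    simpa [max_eq_left hs] using hleN s y hy
  obtain ⟨y₀, hy₀⟩ := hKne
  have hN0 : ∀ s, 0 ≤ N s := fun s => (abs_nonneg _).trans (hleN s y₀ hy₀)
  -- continuity of the family
  have hucont : ContinuousOn (fun p : (Fin n → ℝ) × ℝ => |u p.1 (max p.2 0)|)
      (K ×ˢ (univ : Set ℝ)) := by
    have h1 : ContinuousOn (fun p : (Fin n → ℝ) × ℝ => (p.1, max p.2 0))
        (K ×ˢ (univ : Set ℝ)) :=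
      (continuous_fst.prodMk (continuous_snd.max continuous_const)).continuousOn
    have hmaps : MapsTo (fun p : (Fin n → ℝ) × ℝ => (p.1, max p.2 0))
        (K ×ˢ (univ : Set ℝ)) (K ×ˢ Ici (0:ℝ)) := fun p hp => ⟨hp.1, show (0:ℝ) ≤ max p.2 0 from le_max_right _ _⟩
    exact (huc.comp h1 hmaps).abs
  -- continuity of N
  have hNcont : Continuous N := by
    rw [Metric.continuous_iff]
    intro b ε hε
    have hKIc : IsCompact (K ×ˢ Icc (b-1) (b+1)) := hKc.prod isCompact_Icc
    have hu' : UniformContinuousOn (fun p : (Fin n → ℝ) × ℝ => |u p.1 (max p.2 0)|)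
        (K ×ˢ Icc (b-1) (b+1)) :=
      hKIc.uniformContinuousOn_of_continuous
        (hucont.mono (fun p hp => ⟨hp.1, mem_univ _⟩))
    rw [Metric.uniformContinuousOn_iff] at hu'
    obtain ⟨δ, hδ, hδ'⟩ := hu' (ε/2) (half_pos hε)
    refine ⟨min δ 1, lt_min hδ one_pos, fun a hab => ?_⟩
    have hab1 : |a - b| < 1 := by
      rw [Real.dist_eq] at hab
      exact lt_of_lt_of_le hab (min_le_right _ _)
    have habδ : dist a b < δ := lt_of_lt_of_le hab (min_le_left _ _)
    have haI : a ∈ Icc (b-1) (b+1) := by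
      rcases abs_lt.1 hab1 with ⟨h1, h2⟩
      constructor <;> linarith
    have hbI : b ∈ Icc (b-1) (b+1) := by constructor <;> linarith
    have key : ∀ y ∈ K, |(|u y (max a 0)|) - (|u y (max b 0)|)| < ε/2 := by
      intro y hy
      have hd : dist ((y, a) : (Fin n → ℝ) × ℝ) (y, b) < δ := by
        rw [Prod.dist_eq]
        simp only [dist_self]
        exact max_lt hδ habδ
      have := hδ' (y, a) ⟨hy, haI⟩ (y, b) ⟨hy, hbI⟩ hd
      rwa [Real.dist_eq] at this
    have h1 : N a ≤ N b + ε/2 := by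
      apply csSup_le (hne.closure.image _)
      rintro _ ⟨y, hy, rfl⟩
      have := (abs_lt.1 (key y hy)).2
      have := hleN b y hy
      linarith
    have h2 : N b ≤ N a + ε/2 := by
      apply csSup_le (hne.closure.image _)
      rintro _ ⟨y, hy, rfl⟩
      have := (abs_lt.1 (key y hy)).1
      have := hleN a y hy
      linarith
    rw [Real.dist_eq, abs_lt]
    constructor <;> linarith
  -- the function gE and its primitive G
  set gE : ℝ → ℝ := fun s => Real.exp (max s 0) * N s with hgEdef
  have hgEcont : Continuous gE := ((continuous_id.max continuous_const).rexp).mul hNcont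
  set G : ℝ → ℝ := fun s => ∫ r in (0:ℝ)..s, gE r with hGdef
  have hG : ∀ s, HasDerivAt G (gE s) s := fun s =>
    (hgEcont.integral_hasStrictDerivAt 0 s).hasDerivAt
  have hG0 : G 0 = 0 := intervalIntegral.integral_same
  have hGcont : Continuous G :=
    continuous_iff_continuousAt.2 fun s => (hG s).continuousAt
  -- bound on the nonlocal term
  have hIb : ∀ x' : Fin n → ℝ, ∀ s ≥ (0:ℝ),
      |∫ z in {z | x' + z ∈ Ω}, u (x' + z) s * μ z| ≤ N s := by
    intro x' s hs
    set A : Set (Fin n → ℝ) := {z | x' + z ∈ Ω} with hAdef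
    have hAopen : IsOpen A := hΩo.preimage (continuous_const.add continuous_id)
    have hAmeas : MeasurableSet A := hAopen.measurableSet
    have hcont : ContinuousOn (fun z => u (x' + z) s) A := by
      have h1 : ContinuousOn (fun z : Fin n → ℝ => ((x' + z, s) : (Fin n → ℝ) × ℝ)) A :=
        ((continuous_const.add continuous_id).prodMk continuous_const).continuousOn
      have hmaps : MapsTo (fun z : Fin n → ℝ => ((x' + z, s) : (Fin n → ℝ) × ℝ))
          A (K ×ˢ Ici (0:ℝ)) := fun z hz => ⟨hsub hz, hs⟩
      exact huc.comp h1 hmaps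
    have hμA : Integrable μ (volume.restrict A) := hμint.restrict
    have hb : ∀ᵐ z ∂(volume.restrict A), ‖u (x' + z) s * μ z‖ ≤ N s * μ z := by
      rw [ae_restrict_iff' hAmeas]
      filter_upwards with z hz
      rw [Real.norm_eq_abs, abs_mul, abs_of_nonneg (hμ0 z)]
      exact mul_le_mul_of_nonneg_right (hleN' s hs _ (hsub hz)) (hμ0 z)
    calc |∫ z in A, u (x' + z) s * μ z| ≤ ∫ z in A, N s * μ z := by
          rw [← Real.norm_eq_abs]
          exact norm_integral_le_of_norm_le (hμA.const_mul _) hb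
      _ = N s * ∫ z in A, μ z := integral_const_mul _ _
      _ ≤ N s * 1 := by
          apply mul_le_mul_of_nonneg_left _ (hN0 s)
          rw [← hμ1]
          exact setIntegral_le_integral hμint (Filter.Eventually.of_forall hμ0)
      _ = N s := mul_one _
  -- continuity of s ↦ exp s * u x' s on Ici 0 for x' ∈ K
  have hwcont : ∀ x' ∈ K, ContinuousOn (fun s => Real.exp s * u x' s) (Ici (0:ℝ)) := by
    intro x' hx'
    apply (Real.continuous_exp.continuousOn).mul
    have h1 : ContinuousOn (fun s : ℝ => ((x', s) : (Fin n → ℝ) × ℝ)) (Ici (0:ℝ)) :=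
      (continuous_const.prodMk continuous_id).continuousOn
    exact huc.comp h1 (fun s hs => ⟨hx', hs⟩)
  -- the key Gronwall-type estimate for interior points
  have hkey : ∀ x' ∈ Ω, ∀ t' > (0:ℝ), |Real.exp t' * u x' t'| ≤ C + G t' := by
    intro x' hx' t' ht'
    set f : ℝ → ℝ := fun s => Real.exp s * u x' s with hfdef
    set f' : ℝ → ℝ := fun s => Real.exp s * ∫ z in {z | x' + z ∈ Ω}, u (x' + z) s * μ z
      with hf'def
    have hstep : ∀ a ∈ Ioc (0:ℝ) t', |f t'| ≤ |f a| + (G t' - G a) := by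
      intro a ha
      have hfc : ContinuousOn f (Icc a t') :=
        (hwcont x' (hsub hx')).mono (fun s hs => le_trans (le_of_lt ha.1) hs.1)
      have hfd : ∀ s ∈ Ico a t', HasDerivWithinAt f (f' s) (Ici s) s := by
        intro s hs
        have hs0 : 0 < s := lt_of_lt_of_le ha.1 hs.1
        have hd : HasDerivAt f
            (Real.exp s * u x' s + Real.exp s *
              ((∫ z in {z | x' + z ∈ Ω}, u (x' + z) s * μ z) - u x' s)) s :=
          (Real.hasDerivAt_exp s).mul (hsol x' hx' s hs0)
        have : HasDerivAt f (f' s) s := by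
          convert hd using 1
          simp only [hf'def]
          ring
        exact this.hasDerivWithinAt
      have hB : ∀ s, HasDerivAt (fun s => |f a| + (G s - G a)) (gE s) s := by
        intro s
        simpa using (((hG s).sub_const (G a)).const_add (|f a|))
      have hbound : ∀ s ∈ Ico a t', ‖f' s‖ ≤ gE s := by
        intro s hs
        have hs0 : (0:ℝ) ≤ s := le_trans (le_of_lt ha.1) hs.1
        rw [Real.norm_eq_abs, hf'def]
        simp only
        rw [abs_mul, abs_of_pos (Real.exp_pos s), hgEdef]
        simp only [max_eq_left hs0]
        exact mul_le_mul_of_nonneg_left (hIb x' s hs0) (le_of_lt (Real.exp_pos s))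
      have := image_norm_le_of_norm_deriv_right_le_deriv_boundary hfc hfd
        (by simp [Real.norm_eq_abs]) hB hbound (right_mem_Icc.2 ha.2)
      rw [Real.norm_eq_abs] at this
      linarith [this]
    -- take the limit a → 0⁺
    have hlim : Tendsto (fun a => |f a| + (G t' - G a)) (nhdsWithin 0 (Ioi 0))
        (nhds (|f 0| + (G t' - G 0))) := by
      apply Tendsto.add
      · have h1 : ContinuousWithinAt f (Ici (0:ℝ)) 0 :=
          (hwcont x' (hsub hx')) 0 (self_mem_Ici)
        have h2 : Tendsto f (nhdsWithin 0 (Ioi 0)) (nhds (f 0)) :=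
          h1.tendsto.mono_left (nhdsWithin_mono _ Ioi_subset_Ici_self)
        exact (continuous_abs.tendsto _).comp h2
      · exact ((continuous_const.sub hGcont).tendsto _).mono_left nhdsWithin_le_nhds
    have hle : |f t'| ≤ |f 0| + (G t' - G 0) := by
      refine ge_of_tendsto hlim ?_
      filter_upwards [Ioc_mem_nhdsGT ht'] with a ha
      exact hstep a ha
    have hf0 : |f 0| ≤ C := by
      simp only [hfdef, Real.exp_zero, one_mul]
      rw [hu0 x' (hsub hx')]
      exact hC x' hx'
    rw [hG0] at hle
    linarith
  -- extend to closure and all times t' ≥ 0 by continuity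
  have hkeyK : ∀ t' ≥ (0:ℝ), ∀ y ∈ K, |Real.exp t' * u y t'| ≤ C + G t' := by
    intro t' ht' y hy
    have hΩcase : ∀ y' ∈ Ω, |Real.exp t' * u y' t'| ≤ C + G t' := by
      intro y' hy'
      rcases eq_or_lt_of_le ht' with h0 | hpos
      · subst h0
        rw [hG0, Real.exp_zero, one_mul, hu0 y' (hsub hy')]
        simpa using hC y' hy'
      · exact hkey y' hy' t' hpos
    have hcont2 : ContinuousOn (fun y' => |Real.exp t' * u y' t'|) K := by
      apply ContinuousOn.abs
      apply ContinuousOn.mul continuousOn_const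
      have h1 : ContinuousOn (fun y' : Fin n → ℝ => ((y', t') : (Fin n → ℝ) × ℝ)) K :=
        (continuous_id.prodMk continuous_const).continuousOn
      exact huc.comp h1 (fun y' hy' => ⟨hy', ht'⟩)
    have hclosed : IsClosed (K ∩ (fun y' => |Real.exp t' * u y' t'|) ⁻¹' Iic (C + G t')) :=
      hcont2.preimage_isClosed_of_isClosed isClosed_closure isClosed_Iic
    have hsub2 : Ω ⊆ K ∩ (fun y' => |Real.exp t' * u y' t'|) ⁻¹' Iic (C + G t') :=
      fun y' hy' => ⟨hsub hy', hΩcase y' hy'⟩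
    exact (closure_minimal hsub2 hclosed hy).2
  -- N satisfies the integral inequality
  have hNG : ∀ s ≥ (0:ℝ), gE s ≤ C + G s := by
    intro s hs
    have h1 : N s ≤ (C + G s) / Real.exp s := by
      apply csSup_le (hne.closure.image _)
      rintro _ ⟨y, hy, rfl⟩
      rw [le_div_iff₀ (Real.exp_pos s), mul_comm]
      have := hkeyK s hs y hy
      rw [abs_mul, abs_of_pos (Real.exp_pos s)] at this
      simpa [max_eq_left hs] using this
    have : gE s ≤ Real.exp s * ((C + G s) / Real.exp s) := by
      rw [hgEdef]
      simp only [max_eq_left hs]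
      exact mul_le_mul_of_nonneg_left h1 (le_of_lt (Real.exp_pos s))
    rwa [mul_div_cancel₀ _ (ne_of_gt (Real.exp_pos s))] at this
  -- Gronwall: (C + G s) e^{-s} is antitone on [0, t]
  set φ : ℝ → ℝ := fun s => (C + G s) * Real.exp (-s) with hφdef
  have hφ' : ∀ s, HasDerivAt φ
      (gE s * Real.exp (-s) + (C + G s) * (-Real.exp (-s))) s := by
    intro s
    have he : HasDerivAt (fun s : ℝ => Real.exp (-s)) (-Real.exp (-s)) s := by
      have := (Real.hasDerivAt_exp (-s)).comp s (hasDerivAt_neg s)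
      simp only [mul_neg, mul_one] at this
      exact this
    exact ((hG s).const_add C).mul he
  have hanti : AntitoneOn φ (Icc 0 t) := by
    apply antitoneOn_of_deriv_nonpos (convex_Icc 0 t)
    · exact (continuous_iff_continuousAt.2 fun s => (hφ' s).continuousAt).continuousOn
    · intro s hs
      exact (hφ' s).differentiableAt.differentiableWithinAt
    · intro s hs
      rw [interior_Icc] at hs
      rw [(hφ' s).deriv]
      have h1 : gE s ≤ C + G s := hNG s (le_of_lt hs.1)
      have h2 : (0:ℝ) < Real.exp (-s) := Real.exp_pos _
      nlinarith
  have hφt : φ t ≤ C := by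
    rcases eq_or_lt_of_le ht with h0 | hpos
    · subst h0
      simp [hφdef, hG0]
    · have := hanti (left_mem_Icc.2 ht) (right_mem_Icc.2 ht) ht
      simpa [hφdef, hG0] using this
  -- conclude
  have hfinal := hkeyK t ht x (hsub hx)
  rw [abs_mul, abs_of_pos (Real.exp_pos t)] at hfinal
  have hCG : C + G t ≤ C * Real.exp t := by
    have h := mul_le_mul_of_nonneg_right hφt (le_of_lt (Real.exp_pos t))
    rwa [mul_assoc, ← Real.exp_add, neg_add_cancel, Real.exp_zero, mul_one] at h
  have h2 := hfinal.trans hCG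
  rw [mul_comm C] at h2
  exact le_of_mul_le_mul_left h2 (Real.exp_pos t)
end
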